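/- arXiv:1702.07180 — 12 statements merged into one kernel-verified Lean document; each statement's English description precedes it below -/
import Mathlib

section
/- Let r ≥ 1 and let F be a field of characteristic 0 or of characteristic greater than r. Let g_{i,j} ∈ F[x₁,…,xₙ] for i ∈ [k] and j ∈ [r] be polynomials each of total degree at most δ. Then there exist constants c₁, …, c_{k·2^r} ∈ F and polynomials h₁, …, h_{k·2^r} ∈ F[x₁,…,xₙ], each of total degree at most δ, such that ∑_{i=1}^{k} ∏_{j=1}^{r} g_{i,j} = ∑_{i=1}^{k·2^r} cᵢ · hᵢ^r. -/
open Finset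

lemma multinomial_subset' {α : Type*} [DecidableEq α] {s t : Finset α} (h : s ⊆ t)
    (f : α → ℕ) (hf : ∀ i ∈ t, i ∉ s → f i = 0) :
    Nat.multinomial t f = Nat.multinomial s f := by
  unfold Nat.multinomial
  rw [Finset.sum_subset h (fun i hi his => hf i hi his),
    Finset.prod_subset h (fun i hi his => by rw [hf i hi his]; rfl)]

lemma polar {R : Type*} [CommRing R] (r : ℕ) (hr : 1 ≤ r) (x : Fin r → R) :
    ∑ S : Finset (Fin r), (-1 : R) ^ (r - S.card) * (∑ j ∈ S, x j) ^ r
      = (r.factorial : R) * ∏ j, x j := by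
  classical
  have key : ∀ S : Finset (Fin r), piAntidiag S r =
      (piAntidiag (univ : Finset (Fin r)) r).filter (fun k => ∀ i, k i ≠ 0 → i ∈ S) := by
    intro S
    ext k
    simp only [mem_piAntidiag, mem_filter, mem_univ, ne_eq]
    constructor
    · rintro ⟨hsum, hsupp⟩
      refine ⟨⟨?_, fun i _ => trivial⟩, hsupp⟩
      exact ((Finset.sum_subset (subset_univ S) (fun i _ hi => by
        by_contra hne; exact hi (hsupp i hne))).symm).trans hsum
    · rintro ⟨⟨hsum, _⟩, hsupp⟩
      refine ⟨?_, hsupp⟩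
      exact (Finset.sum_subset (subset_univ S) (fun i _ hi => by
        by_contra hne; exact hi (hsupp i hne))).trans hsum
  simp_rw [Finset.sum_pow_eq_sum_piAntidiag, Finset.mul_sum]
  rw [Finset.sum_congr rfl (fun S _ => by rw [key S, Finset.sum_filter])]
  rw [Finset.sum_comm]
  have main : ∀ k ∈ piAntidiag (univ : Finset (Fin r)) r,
      (∑ S : Finset (Fin r), if ∀ i, k i ≠ 0 → i ∈ S then
        (-1 : R) ^ (r - S.card) * ((Nat.multinomial S k : R) * ∏ i ∈ S, x i ^ k i) else 0)
      = if ∀ i, k i ≠ 0 then (r.factorial : R) * ∏ j, x j else 0 := by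
    intro k hk
    rw [mem_piAntidiag] at hk
    obtain ⟨hksum, -⟩ := hk
    set A : Finset (Fin r) := univ.filter (fun i => k i ≠ 0) with hA
    have hmemA : ∀ i, i ∈ A ↔ k i ≠ 0 := by intro i; simp [hA]
    have hsuppA : ∀ i ∉ A, k i = 0 := by
      intro i hi; by_contra hne; exact hi ((hmemA i).mpr hne)
    -- rewrite the condition as A ⊆ S
    have hcond : ∀ S : Finset (Fin r), (∀ i, k i ≠ 0 → i ∈ S) ↔ A ⊆ S := by
      intro S
      constructor
      · intro h i hi; exact h i ((hmemA i).mp hi)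
      · intro h i hi; exact h ((hmemA i).mpr hi)
    -- for S ⊇ A the summand is constant times sign
    have hconst : ∀ S : Finset (Fin r), A ⊆ S →
        (Nat.multinomial S k : R) * ∏ i ∈ S, x i ^ k i
          = (Nat.multinomial univ k : R) * ∏ i ∈ univ, x i ^ k i := by
      intro S hS
      rw [multinomial_subset' hS k (fun i _ hi => hsuppA i hi),
        multinomial_subset' (subset_univ A) k (fun i _ hi => hsuppA i hi),
        Finset.prod_subset (subset_univ S) (fun i _ hi => by
          rw [hsuppA i (fun hiA => hi (hS hiA)), pow_zero])]
    have step1 : (∑ S : Finset (Fin r), if ∀ i, k i ≠ 0 → i ∈ S then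
        (-1 : R) ^ (r - S.card) * ((Nat.multinomial S k : R) * ∏ i ∈ S, x i ^ k i) else 0)
        = ((Nat.multinomial univ k : R) * ∏ i ∈ univ, x i ^ k i) *
            ∑ S ∈ univ.filter (fun S : Finset (Fin r) => A ⊆ S), (-1 : R) ^ (r - S.card) := by
      rw [Finset.mul_sum, ← Finset.sum_filter]
      refine Finset.sum_congr (by ext S; simp [hcond S]) (fun S hS => ?_)
      rw [Finset.mem_filter] at hS
      rw [hconst S hS.2]; ring
    rw [step1]
    -- reindex supersets of A by subsets of Aᶜ
    have step2 : (∑ S ∈ univ.filter (fun S : Finset (Fin r) => A ⊆ S),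
        (-1 : R) ^ (r - S.card))
        = ∑ T ∈ Aᶜ.powerset, (-1 : R) ^ (r - (A.card + T.card)) := by
      refine Finset.sum_bij' (fun S _ => S \ A) (fun T _ => A ∪ T) ?_ ?_ ?_ ?_ ?_
      · intro S hS
        rw [Finset.mem_filter] at hS
        rw [Finset.mem_powerset]
        intro i hi
        rw [Finset.mem_sdiff] at hi
        simpa using hi.2
      · intro T hT
        simp only [Finset.mem_filter, Finset.mem_univ, true_and]
        exact Finset.subset_union_left
      · intro S hS
        rw [Finset.mem_filter] at hS
        exact Finset.union_sdiff_of_subset hS.2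
      · intro T hT
        rw [Finset.mem_powerset] at hT
        have hdisj : Disjoint A T := Finset.disjoint_left.mpr
          (fun i hiA hiT => by have := hT hiT; simp only [Finset.mem_compl] at this
                               exact this hiA)
        exact Finset.union_sdiff_cancel_left hdisj
      · intro S hS
        rw [Finset.mem_filter] at hS
        congr 2
        rw [Finset.card_sdiff_of_subset hS.2]
        have := Finset.card_le_card hS.2
        omega
    rw [step2]
    have hcardA : A.card + Aᶜ.card = r := by
      have := Finset.card_add_card_compl A
      simpa using this
    have step3 : (∑ T ∈ Aᶜ.powerset, (-1 : R) ^ (r - (A.card + T.card)))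
        = (-1 : R) ^ Aᶜ.card * ∑ T ∈ Aᶜ.powerset, (-1 : R) ^ T.card := by
      rw [Finset.mul_sum]
      refine Finset.sum_congr rfl (fun T hT => ?_)
      rw [Finset.mem_powerset] at hT
      have h1 : T.card ≤ Aᶜ.card := Finset.card_le_card hT
      have h2 : r - (A.card + T.card) = Aᶜ.card - T.card := by omega
      rw [h2, ← pow_add]
      have h3 : (-1 : R) ^ (Aᶜ.card - T.card) * (-1) ^ (2 * T.card)
          = (-1 : R) ^ (Aᶜ.card + T.card) := by
        rw [← pow_add]; congr 1; omega
      calc (-1 : R) ^ (Aᶜ.card - T.card)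
          = (-1 : R) ^ (Aᶜ.card - T.card) * (-1) ^ (2 * T.card) := by
            rw [pow_mul, neg_one_sq, one_pow, mul_one]
        _ = (-1 : R) ^ (Aᶜ.card + T.card) := h3
    rw [step3]
    have step4 : (∑ T ∈ Aᶜ.powerset, (-1 : R) ^ T.card)
        = if Aᶜ = ∅ then 1 else 0 := by
      have := Finset.sum_powerset_neg_one_pow_card (x := Aᶜ)
      have h := congrArg (Int.cast : ℤ → R) this
      push_cast at h
      rw [h]
    rw [step4]
    by_cases hAc : Aᶜ = ∅
    · have hAuniv : A = univ := by
        rwa [Finset.compl_eq_empty_iff] at hAc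
      have hall : ∀ i, k i ≠ 0 := by
        intro i
        rw [← hmemA i, hAuniv]; exact mem_univ i
      have hk1 : ∀ i : Fin r, k i = 1 := by
        by_contra hne
        push_neg at hne
        obtain ⟨i0, hi0⟩ := hne
        have h2 : 2 ≤ k i0 := by have := hall i0; omega
        have hlt : ∑ i : Fin r, (1 : ℕ) < ∑ i, k i := by
          refine Finset.sum_lt_sum (fun i _ => ?_) ⟨i0, mem_univ i0, by omega⟩
          have := hall i; omega
        simp only [Finset.sum_const, Finset.card_univ, Fintype.card_fin, smul_eq_mul,
          mul_one] at hlt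
        have hksum' : (∑ i : Fin r, k i) = r := hksum
        omega
      have hmult : Nat.multinomial univ k = r.factorial := by
        have := Nat.multinomial_spec (univ : Finset (Fin r)) k
        have hprod : (∏ i : Fin r, (k i).factorial) = 1 := by
          refine Finset.prod_eq_one (fun i _ => by rw [hk1 i]; rfl)
        rw [hprod, one_mul, hksum] at this
        exact this
      rw [if_pos hAc, if_pos hall, hmult, hAc]
      have : ∀ i : Fin r, x i ^ k i = x i := fun i => by rw [hk1 i, pow_one]
      rw [Finset.prod_congr rfl (fun i _ => this i)]
      simp
    · rw [if_neg hAc]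
      have : ¬ (∀ i, k i ≠ 0) := by
        intro hall
        apply hAc
        rw [Finset.compl_eq_empty_iff, Finset.eq_univ_iff_forall]
        exact fun i => (hmemA i).mpr (hall i)
      rw [if_neg this, mul_zero, mul_zero]
  rw [Finset.sum_congr rfl main, ← Finset.sum_filter]
  have huniq : (univ.piAntidiag r).filter (fun k : Fin r → ℕ => ∀ i, k i ≠ 0)
      = {fun _ => 1} := by
    ext k
    simp only [Finset.mem_filter, mem_piAntidiag, Finset.mem_singleton, ne_eq]
    constructor
    · rintro ⟨⟨hksum, -⟩, hall⟩
      funext i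
      by_contra hne
      have h2 : 2 ≤ k i := by have := hall i; omega
      have hlt : ∑ j : Fin r, (1 : ℕ) < ∑ j, k j := by
        refine Finset.sum_lt_sum (fun j _ => ?_) ⟨i, mem_univ i, by omega⟩
        have := hall j; omega
      simp only [Finset.sum_const, Finset.card_univ, Fintype.card_fin, smul_eq_mul,
        mul_one] at hlt
      have hksum' : (∑ j : Fin r, k j) = r := hksum
      omega
    · rintro rfl
      refine ⟨⟨?_, fun i _ => mem_univ i⟩, fun i => one_ne_zero⟩
      simp
  rw [huniq, Finset.sum_singleton]


/-- **Fischer's trick.** Over a field of characteristic `0` or `> r`, any sum of `k`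
products of `r` polynomials of degree at most `δ` can be rewritten as a sum of
`k·2^r` scaled `r`-th powers of polynomials of degree at most `δ`. -/
theorem fischer_trick
    (F : Type*) [Field F] (n k r δ : ℕ) (hr : 1 ≤ r)
    (hchar : ringChar F = 0 ∨ r < ringChar F)
    (g : Fin k → Fin r → MvPolynomial (Fin n) F)
    (hdeg : ∀ i j, (g i j).totalDegree ≤ δ) :
    ∃ (c : Fin (k * 2 ^ r) → F) (h : Fin (k * 2 ^ r) → MvPolynomial (Fin n) F),
      (∀ i, (h i).totalDegree ≤ δ) ∧
      (∑ i, ∏ j, g i j) = ∑ i, c i • (h i) ^ r := by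
  classical
  have hfac : (r.factorial : F) ≠ 0 := by
    rcases hchar with h0 | hlt
    · have : CharP F 0 := h0 ▸ ringChar.charP F
      haveI := this
      haveI := CharP.charP_to_charZero F
      exact Nat.cast_ne_zero.mpr r.factorial_ne_zero
    · rcases CharP.char_is_prime_or_zero F (ringChar F) with hp | h0
      · rw [Ne, CharP.cast_eq_zero_iff F (ringChar F)]
        intro hdvd
        have := (Nat.Prime.dvd_factorial hp).mp hdvd
        omega
      · omega
  have hcard : Fintype.card (Fin k × Finset (Fin r)) = k * 2 ^ r := by simp
  let e : Fin k × Finset (Fin r) ≃ Fin (k * 2 ^ r) := Fintype.equivFinOfCardEq hcard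
  refine ⟨fun i => (r.factorial : F)⁻¹ * (-1) ^ (r - ((e.symm i).2).card),
    fun i => ∑ j ∈ (e.symm i).2, g (e.symm i).1 j, fun i => ?_, ?_⟩
  · refine le_trans (MvPolynomial.totalDegree_finset_sum _ _) ?_
    exact Finset.sup_le fun j _ => hdeg _ j
  · rw [← Equiv.sum_comp e (fun i => ((r.factorial : F)⁻¹ *
      (-1) ^ (r - ((e.symm i).2).card)) • (∑ j ∈ (e.symm i).2, g (e.symm i).1 j) ^ r)]
    simp only [Equiv.symm_apply_apply]
    rw [Fintype.sum_prod_type]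
    refine Finset.sum_congr rfl fun i _ => ?_
    have hp := polar (R := MvPolynomial (Fin n) F) r hr (g i)
    have key : ∀ S : Finset (Fin r),
        ((r.factorial : F)⁻¹ * (-1) ^ (r - S.card)) • (∑ j ∈ S, g i j) ^ r
          = (r.factorial : F)⁻¹ •
            ((-1 : MvPolynomial (Fin n) F) ^ (r - S.card) * (∑ j ∈ S, g i j) ^ r) := by
      intro S
      rw [mul_smul]
      congr 1
      rw [MvPolynomial.smul_eq_C_mul, map_pow, map_neg, map_one]
    have hcast : (r.factorial : MvPolynomial (Fin n) F) * ∏ j, g i j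
        = (r.factorial : F) • ∏ j, g i j := by
      rw [MvPolynomial.smul_eq_C_mul, map_natCast]
    rw [Finset.sum_congr rfl fun S _ => key S, ← Finset.smul_sum, hp, hcast,
      smul_smul, inv_mul_cancel₀ hfac, one_smul]
end

section
/- For natural numbers d, n, ℓ with 1 ≤ d ≤ n ≤ ℓ and ℓ > 10n²/d, there exists a family 𝔉 of subsets of the ground set {1, …, ℓ} such that: every S ∈ 𝔉 has cardinality exactly n; for all distinct S, T ∈ 𝔉 one has |S ∩ T| ≤ d; and the cardinality of 𝔉 is at least 2^{d/10} (i.e., (|𝔉| : ℝ) ≥ 2^{(d:ℝ)/10}). -/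
/-!
Put `q = ⌊ℓ / n⌋` and send a word `w : [n] → [q]` to its graph `{(i, w i)}`, an `n`-subset of
`[n] × [q] ⊆ [ℓ]`; two graphs meet in as many points as the words agree. A maximal set of words
pairwise agreeing in at most `d` places covers `[q]ⁿ` by the sets of words agreeing with one of
its members in more than `d` places, each of size at most `C(n, d+1) q^(n-d-1)`. Since `dq > 9n`,
this is at most a `3^-(d+1)` fraction of `qⁿ`, so the maximal set has at least
`3^(d+1) / 2 ≥ 2^d` members.
-/

open Finset

section Words

variable {ι α : Type*}

def numAgree [Fintype ι] [DecidableEq α] (u v : ι → α) : ℕ := #{i | u i = v i}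

lemma numAgree_comm [Fintype ι] [DecidableEq α] (u v : ι → α) :
    numAgree u v = numAgree v u := by
  simp only [numAgree, eq_comm]

lemma card_filter_le_numAgree_le [Fintype ι] [DecidableEq ι] [Fintype α] [DecidableEq α]
    (u : ι → α) (k : ℕ) :
    #{w | k ≤ numAgree w u} ≤
      (Fintype.card ι).choose k * Fintype.card α ^ (Fintype.card ι - k) := by
  set agreeOn : Finset ι → Finset (ι → α) := fun T =>
    Fintype.piFinset fun i => if i ∈ T then {u i} else univ
  have hsub : filter (fun w => k ≤ numAgree w u) univ ⊆
      (univ.powersetCard k).biUnion agreeOn := by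
    intro w hw
    obtain ⟨T, hT, hTcard⟩ := exists_subset_card_eq (mem_filter.1 hw).2
    refine mem_biUnion.2 ⟨T, mem_powersetCard.2 ⟨subset_univ T, hTcard⟩, ?_⟩
    refine Fintype.mem_piFinset.2 fun i => ?_
    split_ifs with hi
    · exact mem_singleton.2 (mem_filter.1 (hT hi)).2
    · exact mem_univ _
  have hcard : ∀ T ∈ univ.powersetCard k,
      #(agreeOn T) = Fintype.card α ^ (Fintype.card ι - k) := by
    intro T hT
    simp [agreeOn, Fintype.card_piFinset, apply_ite card, prod_ite, ← sdiff_eq_filter,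
      card_univ_sdiff, (mem_powersetCard.1 hT).2]
  calc #{w | k ≤ numAgree w u} ≤ #((univ.powersetCard k).biUnion agreeOn) := card_le_card hsub
    _ ≤ #(univ.powersetCard k) * Fintype.card α ^ (Fintype.card ι - k) :=
      card_biUnion_le_card_mul _ _ _ fun T hT => (hcard T hT).le
    _ = _ := by rw [card_powersetCard, card_univ]

def graphEmbedding (w : ι → α) : ι ↪ ι × α :=
  ⟨fun i => (i, w i), fun _ _ h => (Prod.ext_iff.1 h).1⟩

@[simp]
lemma graphEmbedding_apply (w : ι → α) (i : ι) : graphEmbedding w i = (i, w i) := rfl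

variable [Fintype ι]

def wordGraph (w : ι → α) : Finset (ι × α) := univ.map (graphEmbedding w)

lemma card_wordGraph (w : ι → α) : #(wordGraph w) = Fintype.card ι := by
  simp [wordGraph]

lemma mem_wordGraph {w : ι → α} {x : ι × α} : x ∈ wordGraph w ↔ w x.1 = x.2 := by
  constructor
  · intro hx
    obtain ⟨i, -, rfl⟩ := mem_map.1 hx
    rfl
  · intro hx
    exact mem_map.2 ⟨x.1, mem_univ _, Prod.ext rfl hx⟩

lemma wordGraph_injective : Function.Injective (wordGraph : (ι → α) → Finset (ι × α)) := by
  intro u v h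
  funext i
  have : (i, u i) ∈ wordGraph v := h ▸ mem_wordGraph.2 rfl
  exact (mem_wordGraph.1 this).symm

lemma card_wordGraph_inter [DecidableEq ι] [DecidableEq α] (u v : ι → α) :
    #(wordGraph u ∩ wordGraph v) = numAgree u v := by
  have : wordGraph u ∩ wordGraph v = (univ.filter fun i => u i = v i).map (graphEmbedding u) := by
    ext ⟨i, a⟩
    simp only [mem_inter, mem_wordGraph, mem_map, mem_filter, mem_univ, true_and,
      graphEmbedding_apply, Prod.mk.injEq]
    constructor
    · rintro ⟨rfl, hv⟩
      exact ⟨i, hv.symm, rfl, rfl⟩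
    · rintro ⟨j, hj, rfl, rfl⟩
      exact ⟨rfl, hj.symm⟩
  rw [this, card_map]
  rfl

end Words

lemma exists_pairwise_not_rel_card_le_mul {β : Type*} [Fintype β] (r : β → β → Prop) [DecidableRel r]
    [Std.Symm r] {B : ℕ} (hB : ∀ u, #{w | r w u} ≤ B) :
    ∃ W : Finset β, (W : Set β).Pairwise (fun u v => ¬ r u v) ∧
      Fintype.card β ≤ #W * (1 + B) := by
  classical
  obtain ⟨W, hW, hmax⟩ := exists_max_image
    (univ.filter fun W : Finset β => (W : Set β).Pairwise fun u v => ¬ r u v) card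
    ⟨∅, by simp⟩
  have hWpair := (mem_filter.1 hW).2
  have hcover : univ ⊆ W ∪ W.biUnion fun u => {w | r w u} := by
    intro w _
    by_contra hfar
    simp only [mem_union, mem_biUnion, mem_filter, mem_univ, true_and, not_or,
      not_exists, not_and] at hfar
    have hins := hmax (insert w W) <| mem_filter.2 ⟨mem_univ _, by
      rw [coe_insert]
      exact hWpair.insert fun u hu _ => ⟨hfar.2 u hu, fun h => hfar.2 u hu (Std.Symm.symm _ _ h)⟩⟩
    rw [card_insert_of_notMem hfar.1] at hins
    omega
  refine ⟨W, hWpair, ?_⟩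
  calc Fintype.card β = #(univ : Finset β) := card_univ.symm
    _ ≤ #W + #(W.biUnion fun u => {w | r w u}) := (card_le_card hcover).trans (card_union_le _ _)
    _ ≤ #W + #W * B := by grw [card_biUnion_le_card_mul _ _ _ fun u _ => hB u]
    _ = #W * (1 + B) := by ring

lemma choose_mul_three_pow_le {n k q : ℕ} (hk : 0 < k) (h : 9 * n ≤ k * q) :
    n.choose k * 3 ^ k ≤ q ^ k := by
  have hk' : (0 : ℝ) < k := by exact_mod_cast hk
  have hfact : (k : ℝ) ^ k / k.factorial ≤ Real.exp 1 ^ k := by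
    rw [Real.exp_one_pow]
    exact Real.pow_div_factorial_le_exp _ hk'.le k
  have hlin : 3 * Real.exp 1 * n ≤ k * q := by
    have : (9 * n : ℝ) ≤ k * q := by exact_mod_cast h
    nlinarith [Real.exp_one_lt_three, (n.cast_nonneg : (0 : ℝ) ≤ n)]
  rw [← Nat.cast_le (α := ℝ)]
  push_cast
  refine le_of_mul_le_mul_right ?_ (pow_pos hk' k)
  calc (n.choose k : ℝ) * 3 ^ k * k ^ k ≤ n ^ k / k.factorial * 3 ^ k * k ^ k := by
        gcongr; exact Nat.choose_le_pow_div k n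
    _ = (3 * n) ^ k * ((k : ℝ) ^ k / k.factorial) := by ring
    _ ≤ (3 * n) ^ k * Real.exp 1 ^ k := by gcongr
    _ = (3 * Real.exp 1 * n) ^ k := by ring
    _ ≤ (k * q) ^ k := by gcongr
    _ = q ^ k * k ^ k := by ring

lemma nine_mul_lt_div_mul {n d ℓ : ℕ} (hdn : d ≤ n) (hn : 0 < n) (h : 10 * n ^ 2 < ℓ * d) :
    9 * n < ℓ / n * d := by
  have hℓ := Nat.lt_mul_div_succ ℓ hn
  have h10 : n * (10 * n) < n * ((ℓ / n + 1) * d) :=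
    calc n * (10 * n) = 10 * n ^ 2 := by ring
      _ < ℓ * d := h
      _ ≤ n * (ℓ / n + 1) * d := Nat.mul_le_mul_right d hℓ.le
      _ = n * ((ℓ / n + 1) * d) := by ring
  have := Nat.lt_of_mul_lt_mul_left h10
  nlinarith

lemma exists_two_pow_le_card_pairwise_numAgree_le {n q d : ℕ} (hdn : d ≤ n)
    (hq : 9 * n < q * d) :
    ∃ W : Finset (Fin n → Fin q),
      (W : Set (Fin n → Fin q)).Pairwise (fun u v => numAgree u v ≤ d) ∧ 2 ^ d ≤ #W := by
  have hq10 : 10 ≤ q := by nlinarith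
  have hd : 0 < d := Nat.pos_of_ne_zero fun hd => by simp [hd] at hq
  set B := n.choose (d + 1) * q ^ (n - (d + 1))
  have : Std.Symm fun u v : Fin n → Fin q => d < numAgree u v :=
    ⟨fun u v h => numAgree_comm u v ▸ h⟩
  obtain ⟨W, hW, hcard⟩ := exists_pairwise_not_rel_card_le_mul (fun u v : Fin n → Fin q => d < numAgree u v)
    (B := B) fun u => by simpa using card_filter_le_numAgree_le u (d + 1)
  refine ⟨W, hW.mono' fun u v => le_of_not_gt, ?_⟩
  simp only [Fintype.card_fun, Fintype.card_fin] at hcard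
  have hB : B * 3 ^ (d + 1) ≤ q ^ n := by
    rcases lt_or_ge n (d + 1) with hnd | hdn'
    · simp [B, Nat.choose_eq_zero_of_lt hnd]
    calc B * 3 ^ (d + 1) = q ^ (n - (d + 1)) * (n.choose (d + 1) * 3 ^ (d + 1)) := by ring
      _ ≤ q ^ (n - (d + 1)) * q ^ (d + 1) := by
        gcongr; exact choose_mul_three_pow_le d.succ_pos (by nlinarith)
      _ = q ^ n := by rw [← pow_add, Nat.sub_add_cancel hdn']
  have h3 : 3 ^ (d + 1) ≤ q ^ n :=
    calc 3 ^ (d + 1) ≤ 3 ^ (2 * d) := Nat.pow_le_pow_right (by norm_num) (by omega)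
      _ = 9 ^ d := by rw [pow_mul]; norm_num
      _ ≤ q ^ d := Nat.pow_le_pow_left (by omega) d
      _ ≤ q ^ n := Nat.pow_le_pow_right (by omega) hdn
  have hW3 : 3 ^ (d + 1) ≤ 2 * #W := by
    refine Nat.le_of_mul_le_mul_right (c := 1 + B) ?_ (by positivity)
    nlinarith
  have := Nat.pow_le_pow_left (show 2 ≤ 3 by norm_num) (d + 1)
  rw [pow_succ] at this
  omega

theorem nisan_wigderson_design_general
    (d n ℓ : ℕ) (hd : 1 ≤ d) (hdn : d ≤ n)
    (hl : (10 * (n : ℝ) ^ 2) / (d : ℝ) < (ℓ : ℝ)) :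
    ∃ 𝔉 : Finset (Finset (Fin ℓ)),
      (∀ S ∈ 𝔉, S.card = n) ∧
      (∀ S ∈ 𝔉, ∀ T ∈ 𝔉, S ≠ T → (S ∩ T).card ≤ d) ∧
      (2 : ℝ) ^ ((d : ℝ) / 10) ≤ (𝔉.card : ℝ) := by
  have hn : 0 < n := by omega
  rw [div_lt_iff₀ (by positivity)] at hl
  have hq := nine_mul_lt_div_mul hdn hn (by exact_mod_cast hl)
  obtain ⟨W, hW, hWcard⟩ := exists_two_pow_le_card_pairwise_numAgree_le hdn hq
  let e : Fin n × Fin (ℓ / n) ↪ Fin ℓ :=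
    finProdFinEquiv.toEmbedding.trans (Fin.castLEEmb (Nat.mul_div_le ℓ n))
  have hinj : Function.Injective fun w => (wordGraph w).map e :=
    (map_injective e).comp wordGraph_injective
  refine ⟨W.image fun w => (wordGraph w).map e, ?_, ?_, ?_⟩
  · simp [card_wordGraph]
  · simp only [mem_image]
    rintro _ ⟨u, hu, rfl⟩ _ ⟨v, hv, rfl⟩ huv
    rw [← map_inter, card_map, card_wordGraph_inter]
    exact hW hu hv (ne_of_apply_ne (fun w => (wordGraph w).map e) huv)
  · rw [card_image_of_injective W hinj]
    calc (2 : ℝ) ^ ((d : ℝ) / 10) ≤ 2 ^ (d : ℝ) := by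
          gcongr <;> [norm_num; linarith [(d.cast_nonneg : (0 : ℝ) ≤ d)]]
      _ ≤ #W := by rw [Real.rpow_natCast]; exact_mod_cast hWcard

/-- **Nisan–Wigderson design.** For `1 ≤ d ≤ n ≤ ℓ` with `ℓ > 10n²/d` there is a
family of `n`-element subsets of `{1,…,ℓ}`, pairwise intersecting in at most `d`
elements, of cardinality at least `2^(d/10)`. -/
theorem nisan_wigderson_design
    (d n ℓ : ℕ) (hd : 1 ≤ d) (hdn : d ≤ n) (hnl : n ≤ ℓ)
    (hl : (10 * (n : ℝ) ^ 2) / (d : ℝ) < (ℓ : ℝ)) :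
    ∃ 𝔉 : Finset (Finset (Fin ℓ)),
      (∀ S ∈ 𝔉, S.card = n) ∧
      (∀ S ∈ 𝔉, ∀ T ∈ 𝔉, S ≠ T → (S ∩ T).card ≤ d) ∧
      (2 : ℝ) ^ ((d : ℝ) / 10) ≤ (𝔉.card : ℝ) :=
  nisan_wigderson_design_general d n ℓ hd hdn hl
end

section
/- For all natural numbers k ≥ 1 and ℓ ≥ 1, the number of exponent vectors e ∈ ℕ^ℓ with eᵢ ≥ 1 for all i ∈ [ℓ] and ∏_{i=1}^{ℓ} (eᵢ + 1) ≤ k is strictly less than k². -/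
/-!
Splitting off the first coordinate `a` of `e` gives the recursion
`T_{ℓ+1}(k) = ∑_{1 ≤ a < k} T_ℓ(⌊k / (a + 1)⌋)` for the number `T_ℓ(k)` of such vectors.
By induction `T_ℓ(m) ≤ m²` for every `ℓ`, and hence
`T_{ℓ+1}(k) ≤ ∑_{a=1}^{k-1} ⌊k / (a + 1)⌋² ≤ k² ∑_{a=1}^{k-1} (1/a - 1/(a + 1)) = k² - k`.
-/

open Finset

/-- The box `Icc 1 k` only makes the set visibly finite: `eᵢ + 1 ≤ ∏ⱼ (eⱼ + 1) ≤ k`. -/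
def fullSupportLowCone (ℓ k : ℕ) : Finset (Fin ℓ → ℕ) :=
  {e ∈ Fintype.piFinset fun _ ↦ Icc 1 k | ∏ i, (e i + 1) ≤ k}

theorem mem_fullSupportLowCone {ℓ k : ℕ} {e : Fin ℓ → ℕ} :
    e ∈ fullSupportLowCone ℓ k ↔ (∀ i, 1 ≤ e i) ∧ ∏ i, (e i + 1) ≤ k := by
  simp only [fullSupportLowCone, mem_filter, Fintype.mem_piFinset, mem_Icc]
  refine ⟨fun ⟨he, hk⟩ ↦ ⟨fun i ↦ (he i).1, hk⟩, fun ⟨he, hk⟩ ↦ ⟨fun i ↦ ⟨he i, ?_⟩, hk⟩⟩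
  have : e i + 1 ≤ ∏ j, (e j + 1) := single_le_prod' (fun j _ ↦ Nat.le_add_left 1 (e j)) (mem_univ i)
  omega

theorem card_fullSupportLowCone_zero_le (k : ℕ) : #(fullSupportLowCone 0 k) ≤ k := by
  rcases k with _ | k
  · simp [fullSupportLowCone]
  · exact (card_le_one_of_subsingleton _).trans (by omega)

theorem cons_mem_fullSupportLowCone_succ {ℓ k a : ℕ} {f : Fin ℓ → ℕ} :
    Fin.cons a f ∈ fullSupportLowCone (ℓ + 1) k ↔
      a ∈ Ico 1 k ∧ f ∈ fullSupportLowCone ℓ (k / (a + 1)) := by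
  have hf : 1 ≤ ∏ i, (f i + 1) := one_le_prod' fun i _ ↦ Nat.le_add_left 1 (f i)
  simp only [mem_fullSupportLowCone, Fin.forall_fin_succ, Fin.prod_univ_succ, Fin.cons_zero,
    Fin.cons_succ, mem_Ico, Nat.le_div_iff_mul_le (Nat.succ_pos a)]
  constructor
  · rintro ⟨⟨ha, hf'⟩, hk⟩
    exact ⟨⟨ha, by nlinarith⟩, hf', by linarith⟩
  · rintro ⟨⟨ha, -⟩, hf', hk⟩
    exact ⟨⟨ha, hf'⟩, by linarith⟩

theorem card_fullSupportLowCone_succ (ℓ k : ℕ) :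
    #(fullSupportLowCone (ℓ + 1) k) = ∑ a ∈ Ico 1 k, #(fullSupportLowCone ℓ (k / (a + 1))) := by
  rw [← card_sigma]
  refine card_nbij' (fun e ↦ ⟨e 0, Fin.tail e⟩) (fun p ↦ Fin.cons p.1 p.2) ?_ ?_ ?_ ?_
  · intro e he
    rw [mem_coe, ← Fin.cons_self_tail e, cons_mem_fullSupportLowCone_succ] at he
    simpa using he
  · rintro ⟨a, f⟩ hp
    simpa [cons_mem_fullSupportLowCone_succ] using hp
  · intro e _
    exact Fin.cons_self_tail e
  · rintro ⟨a, f⟩ _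
    simp

theorem div_succ_sq_mul_le (k j : ℕ) : (k / (j + 1)) ^ 2 * (j * (j + 1)) ≤ k ^ 2 := by
  have h := Nat.div_mul_le_self k (j + 1)
  calc (k / (j + 1)) ^ 2 * (j * (j + 1)) = (k / (j + 1) * j) * (k / (j + 1) * (j + 1)) := by ring
    _ ≤ k * k := Nat.mul_le_mul (by nlinarith) h
    _ = k ^ 2 := (sq k).symm

theorem sum_sq_div_succ_add_le (k : ℕ) : ∑ j ∈ Ico 1 k, (k / (j + 1)) ^ 2 + k ≤ k ^ 2 := by
  rcases Nat.eq_zero_or_pos k with rfl | hk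
  · simp
  set f : ℕ → ℚ := fun j ↦ -(k : ℚ) ^ 2 / j
  have hterm : ∀ j ∈ Ico 1 k, (((k / (j + 1)) ^ 2 : ℕ) : ℚ) ≤ f (j + 1) - f j := by
    intro j hjk
    have hj : (0 : ℚ) < j := by exact_mod_cast (mem_Ico.1 hjk).1
    have hf : f (j + 1) - f j = (k : ℚ) ^ 2 / (j * (j + 1)) := by
      simp only [f]; push_cast; field_simp; ring
    rw [hf, le_div_iff₀ (by positivity)]
    exact_mod_cast div_succ_sq_mul_le k j
  have : ((∑ j ∈ Ico 1 k, (k / (j + 1)) ^ 2 : ℕ) : ℚ) ≤ (k : ℚ) ^ 2 - k := by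
    calc _ ≤ ∑ j ∈ Ico 1 k, (f (j + 1) - f j) := by push_cast; exact sum_le_sum hterm
      _ = f k - f 1 := sum_Ico_sub f hk
      _ = (k : ℚ) ^ 2 - k := by simp only [f]; field_simp; ring
  exact_mod_cast (by linarith : ((∑ j ∈ Ico 1 k, (k / (j + 1)) ^ 2 : ℕ) : ℚ) + k ≤ (k : ℚ) ^ 2)

theorem card_fullSupportLowCone_le_sq (ℓ k : ℕ) : #(fullSupportLowCone ℓ k) ≤ k ^ 2 := by
  induction ℓ generalizing k with
  | zero => exact (card_fullSupportLowCone_zero_le k).trans (Nat.le_self_pow two_ne_zero k)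
  | succ ℓ ih =>
    calc #(fullSupportLowCone (ℓ + 1) k) ≤ ∑ j ∈ Ico 1 k, (k / (j + 1)) ^ 2 := by
          rw [card_fullSupportLowCone_succ]; exact sum_le_sum fun j _ ↦ ih _
      _ ≤ k ^ 2 := le_of_add_le_left (sum_sq_div_succ_add_le k)

/-- **Counting full-support low-cone monomials.** For `k, ℓ ≥ 1`, the number of
exponent vectors `e ∈ ℕ^ℓ` with all coordinates positive and cone-size
`∏ (eᵢ + 1) ≤ k` is strictly less than `k²`. -/
theorem count_full_support_low_cone_monomials
    (k ℓ : ℕ) (hk : 1 ≤ k) (hℓ : 1 ≤ ℓ) :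
    {e : Fin ℓ → ℕ | (∀ i, 1 ≤ e i) ∧ ∏ i, (e i + 1) ≤ k}.Finite ∧
    {e : Fin ℓ → ℕ | (∀ i, 1 ≤ e i) ∧ ∏ i, (e i + 1) ≤ k}.ncard < k ^ 2 := by
  have hset : {e : Fin ℓ → ℕ | (∀ i, 1 ≤ e i) ∧ ∏ i, (e i + 1) ≤ k} = fullSupportLowCone ℓ k :=
    Set.ext fun _ ↦ mem_fullSupportLowCone.symm
  rw [hset, Set.ncard_coe_finset]
  refine ⟨finite_toSet _, ?_⟩
  obtain ⟨ℓ, rfl⟩ := Nat.exists_eq_add_of_le' hℓ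
  calc #(fullSupportLowCone (ℓ + 1) k) ≤ ∑ j ∈ Ico 1 k, (k / (j + 1)) ^ 2 := by
        rw [card_fullSupportLowCone_succ]
        exact sum_le_sum fun j _ ↦ card_fullSupportLowCone_le_sq ℓ _
    _ < k ^ 2 := by have := sum_sq_div_succ_add_le k; omega
end

section
/- For all natural numbers n and k ≥ 1, the number of exponent vectors e ∈ ℕ^n with cone-size ∏_{i=1}^{n} (eᵢ + 1) ≤ k is at most k² · ∑_{i=0}^{⌊log₂ k⌋} C(n, i), where C(n,i) is the binomial coefficient and ⌊log₂ k⌋ is the integer base-2 logarithm of k. -/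
/-!
Sort the exponent vectors by their support `T`. Every variable of `T` contributes a factor at
least `2` to the cone-size, so `2 ^ |T| ≤ k`, i.e. `|T| ≤ ⌊log₂ k⌋`; this gives the binomial sum.
For a fixed support there are at most `k²` vectors: removing a variable `a` with `e a = m ≥ 1`
leaves a vector of cone-size at most `k / (m + 1)` on the smaller support, so by induction the
count is at most `∑_{m ≥ 1} (k / (m + 1))² ≤ k² ∑_{m ≥ 1} 1 / (m (m + 1)) ≤ k²`.
-/

open Finset Function

lemma sum_sq_div_succ_le (k : ℕ) : ∑ a ∈ Ico 1 k, (k / (a + 1)) ^ 2 ≤ k ^ 2 := by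
  rcases Nat.eq_zero_or_pos k with rfl | hk
  · simp
  have term_le : ∀ a ∈ Ico 1 k,
      (((k / (a + 1)) ^ 2 : ℕ) : ℚ) ≤ k ^ 2 * (-1 / ((a + 1 : ℕ) : ℚ) - -1 / a) := by
    intro a ha
    have ha : (1 : ℚ) ≤ a := by exact_mod_cast (mem_Ico.mp ha).1
    calc (((k / (a + 1)) ^ 2 : ℕ) : ℚ) ≤ (k / (a + 1)) ^ 2 := by
          push_cast
          gcongr
          exact_mod_cast Nat.cast_div_le
      _ ≤ k ^ 2 / (a * (a + 1)) := by
          rw [div_pow]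
          gcongr
          nlinarith
      _ = k ^ 2 * (-1 / ((a + 1 : ℕ) : ℚ) - -1 / a) := by
          push_cast
          field_simp
          ring
  have telescope := sum_le_sum term_le
  rw [← mul_sum, sum_Ico_sub (f := fun a : ℕ => -1 / (a : ℚ)) hk] at telescope
  rw [← Nat.cast_le (α := ℚ), Nat.cast_sum]
  refine telescope.trans ?_
  push_cast
  exact mul_le_of_le_one_right (by positivity)
    (by norm_num; exact div_nonpos_of_nonpos_of_nonneg (by norm_num) k.cast_nonneg)

lemma card_filter_card_le_eq_sum_choose (α : Type*) [Fintype α] (L : ℕ) :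
    #{s : Finset α | #s ≤ L} = ∑ i ∈ range (L + 1), (Fintype.card α).choose i := by
  rw [card_eq_sum_card_fiberwise (f := card) (t := range (L + 1))
    fun s hs => mem_range_succ_iff.mpr (mem_filter.mp hs).2]
  refine sum_congr rfl fun i hi => ?_
  rw [filter_filter,
    filter_congr fun s _ => and_iff_right_of_imp fun hs => hs ▸ mem_range_succ_iff.mp hi,
    univ_filter_card_eq, card_powersetCard, card_univ]

namespace ConeSize

variable {ι : Type*} [Fintype ι]

def coneSize (e : ι → ℕ) : ℕ := ∏ i, (e i + 1)

def vars (e : ι → ℕ) : Finset ι := {i | e i ≠ 0}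

@[simp]
lemma mem_vars {e : ι → ℕ} {i : ι} : i ∈ vars e ↔ e i ≠ 0 := by
  simp [vars]

@[simp]
lemma vars_eq_empty {e : ι → ℕ} : vars e = ∅ ↔ e = 0 := by
  simp [Finset.eq_empty_iff_forall_notMem, funext_iff]

lemma le_coneSize (e : ι → ℕ) (i : ι) : e i + 1 ≤ coneSize e :=
  single_le_prod' (fun j _ => Nat.le_add_left 1 (e j)) (mem_univ i)

lemma two_pow_card_vars_le_coneSize (e : ι → ℕ) : 2 ^ #(vars e) ≤ coneSize e :=
  calc 2 ^ #(vars e) = ∏ _i ∈ vars e, 2 := (prod_const 2).symm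
    _ ≤ ∏ i ∈ vars e, (e i + 1) := prod_le_prod' fun i hi => by
        have := mem_vars.mp hi
        omega
    _ ≤ coneSize e := prod_le_prod_of_subset_of_one_le' (subset_univ _) fun i _ _ => by omega

variable [DecidableEq ι]

def lowCone (ι : Type*) [Fintype ι] [DecidableEq ι] (k : ℕ) : Finset (ι → ℕ) :=
  {e ∈ Fintype.piFinset fun _ => range k | coneSize e ≤ k}

lemma mem_lowCone {k : ℕ} {e : ι → ℕ} : e ∈ lowCone ι k ↔ coneSize e ≤ k := by
  simp only [lowCone, mem_filter, Fintype.mem_piFinset, mem_range, and_iff_right_iff_imp]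
  exact fun h i => (le_coneSize e i).trans h

lemma coneSize_update_zero_mul (e : ι → ℕ) (a : ι) :
    coneSize (update e a 0) * (e a + 1) = coneSize e := by
  simp only [coneSize, Fintype.prod_eq_mul_prod_compl a, update_self, zero_add, one_mul]
  rw [mul_comm]
  congr 1
  exact prod_congr rfl fun i hi => by rw [update_of_ne (by simpa using hi)]

lemma vars_update_zero (e : ι → ℕ) (a : ι) : vars (update e a 0) = (vars e).erase a := by
  ext i
  by_cases h : i = a <;> simp [h]

lemma card_filter_vars_eq_le (s : Finset ι) (k : ℕ) :
    #{e ∈ lowCone ι k | vars e = s} ≤ k ^ 2 := by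
  induction s using Finset.induction_on generalizing k with
  | empty =>
    simp only [vars_eq_empty, filter_eq']
    split_ifs with h0
    · have hk : 1 ≤ k := by simpa [mem_lowCone, coneSize] using h0
      simpa using Nat.one_le_pow 2 k hk
    · simp
  | insert a s ha ih =>
    have maps : ∀ e ∈ {e ∈ lowCone ι k | vars e = insert a s},
        (⟨e a, update e a 0⟩ : Σ _ : ℕ, ι → ℕ) ∈
          (Ico 1 k).sigma fun m => {e ∈ lowCone ι (k / (m + 1)) | vars e = s} := by
      intro e he
      rw [mem_filter, mem_lowCone] at he
      have hea : e a ≠ 0 := mem_vars.mp (he.2 ▸ mem_insert_self a s)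
      have hlt := (le_coneSize e a).trans he.1
      simp only [mem_sigma, mem_Ico, mem_filter, mem_lowCone, vars_update_zero, he.2,
        erase_insert ha, and_true]
      refine ⟨by omega, ?_⟩
      rw [Nat.le_div_iff_mul_le (by omega), coneSize_update_zero_mul]
      exact he.1
    have inj : Injective fun e => (⟨e a, update e a 0⟩ : Σ _ : ℕ, ι → ℕ) := by
      intro e e' h
      obtain ⟨h₁, h₂⟩ : e a = e' a ∧ update e a 0 = update e' a 0 := by
        simpa only [Sigma.mk.inj_iff, heq_eq_eq] using h
      calc e = update (update e a 0) a (e a) := by rw [update_idem, update_eq_self]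
        _ = update (update e' a 0) a (e' a) := by rw [h₁, h₂]
        _ = e' := by rw [update_idem, update_eq_self]
    calc #{e ∈ lowCone ι k | vars e = insert a s}
        ≤ #((Ico 1 k).sigma fun m => {e ∈ lowCone ι (k / (m + 1)) | vars e = s}) :=
          card_le_card_of_injOn _ maps inj.injOn
      _ = ∑ m ∈ Ico 1 k, #{e ∈ lowCone ι (k / (m + 1)) | vars e = s} := card_sigma _ _
      _ ≤ ∑ m ∈ Ico 1 k, (k / (m + 1)) ^ 2 := sum_le_sum fun m _ => ih _
      _ ≤ k ^ 2 := sum_sq_div_succ_le k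

lemma card_lowCone_le (k : ℕ) :
    #(lowCone ι k) ≤ k ^ 2 * ∑ i ∈ range (Nat.log 2 k + 1), (Fintype.card ι).choose i := by
  rw [← card_filter_card_le_eq_sum_choose]
  refine card_le_mul_card_image_of_maps_to (f := vars) (fun e he => ?_) _
    fun s _ => card_filter_vars_eq_le s k
  rw [mem_filter]
  exact ⟨mem_univ _, Nat.le_log_of_pow_le one_lt_two
    ((two_pow_card_vars_le_coneSize e).trans (mem_lowCone.mp he))⟩

end ConeSize

theorem count_low_cone_monomials_general
    (n k : ℕ) :
    {e : Fin n → ℕ | ∏ i, (e i + 1) ≤ k}.Finite ∧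
    {e : Fin n → ℕ | ∏ i, (e i + 1) ≤ k}.ncard ≤
      k ^ 2 * ∑ i ∈ Finset.range (Nat.log 2 k + 1), n.choose i := by
  have h : {e : Fin n → ℕ | ∏ i, (e i + 1) ≤ k} = ConeSize.lowCone (Fin n) k := by
    ext e
    exact ConeSize.mem_lowCone.symm
  rw [h, Set.ncard_coe_finset]
  exact ⟨finite_toSet _, by simpa using ConeSize.card_lowCone_le (ι := Fin n) k⟩

/-- **Counting low-cone monomials.** For `k ≥ 1`, the number of exponent vectors
`e ∈ ℕ^n` with cone-size `∏ (eᵢ + 1) ≤ k` is at most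
`k² · ∑_{i=0}^{⌊log₂ k⌋} C(n, i)`. -/
theorem count_low_cone_monomials
    (n k : ℕ) (hk : 1 ≤ k) :
    {e : Fin n → ℕ | ∏ i, (e i + 1) ≤ k}.Finite ∧
    {e : Fin n → ℕ | ∏ i, (e i + 1) ≤ k}.ncard ≤
      k ^ 2 * ∑ i ∈ Finset.range (Nat.log 2 k + 1), n.choose i :=
  count_low_cone_monomials_general n k
end

section
/- Let F be a field, V a finite-dimensional F-vector space with dim_F V = k ≥ 1, n a natural number, and f a finitely supported function from exponent vectors in ℕ^n to V. Suppose B is a cone-closed finite set of exponent vectors such that the family {f(m) : m ∈ B} is linearly independent over F and spans the F-linear span of all values of f. Then every m ∈ B satisfies ∏_{i=1}^{n} (mᵢ + 1) ≤ k (cone-size at most k) and |{i : mᵢ > 0}| ≤ ⌊log₂ k⌋ (support size at most log₂ k). -/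
/-! The cone of a monomial `m` (its submonomials, `Finset.Iic m`) has `∏ i, (m i + 1)` elements.
A cone-closed linearly independent family contains the whole cone of each of its monomials, so
that cone has at most `dim V = k` elements. Every variable occurring in `m` contributes a factor
at least `2` to the cone-size, which gives `2 ^ |supp m| ≤ k`. -/

open Finset

section ConeSize

variable {ι : Type*} [Fintype ι]

lemma card_Iic_eq_prod_succ [DecidableEq ι] (m : ι → ℕ) : #(Iic m) = ∏ i, (m i + 1) := by
  simp only [Pi.card_Iic, Nat.card_Iic]

lemma prod_succ_le_card_of_isLowerSet [DecidableEq ι] {B : Finset (ι → ℕ)}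
    (hB : IsLowerSet (B : Set (ι → ℕ))) {m : ι → ℕ} (hm : m ∈ B) : ∏ i, (m i + 1) ≤ #B := by
  rw [← card_Iic_eq_prod_succ]
  exact card_le_card fun e he => hB (mem_Iic.mp he) hm

lemma two_pow_card_support_le_prod_succ (m : ι → ℕ) :
    2 ^ #{i | 0 < m i} ≤ ∏ i, (m i + 1) :=
  calc 2 ^ #{i | 0 < m i} = ∏ _ ∈ {i | 0 < m i}, 2 := (prod_const 2).symm
    _ ≤ ∏ i ∈ {i | 0 < m i}, (m i + 1) :=
      prod_le_prod' fun _ hi => Nat.succ_le_succ (mem_filter.mp hi).2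
    _ ≤ ∏ i, (m i + 1) :=
      prod_le_prod_of_subset_of_one_le' (filter_subset _ _) fun i _ _ => Nat.le_add_left 1 (m i)

end ConeSize

theorem cone_closed_basis_low_cone_low_support_general
    (F : Type*) [Field F] (V : Type*) [AddCommGroup V] [Module F V]
    [FiniteDimensional F V] (k n : ℕ)
    (hdim : Module.finrank F V = k)
    (f : (Fin n → ℕ) →₀ V) (B : Finset (Fin n → ℕ))
    (hclosed : ∀ m ∈ B, ∀ e : Fin n → ℕ, e ≤ m → e ∈ B)
    (hind : LinearIndependent F (fun m : B => f m)) :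
    ∀ m ∈ B, (∏ i, (m i + 1)) ≤ k ∧
      (Finset.univ.filter fun i => 0 < m i).card ≤ Nat.log 2 k := by
  intro m hm
  have hB : IsLowerSet (B : Set (Fin n → ℕ)) := fun m e he hm => hclosed m hm e he
  have hcone : ∏ i, (m i + 1) ≤ k :=
    calc ∏ i, (m i + 1) ≤ #B := prod_succ_le_card_of_isLowerSet hB hm
      _ = Fintype.card B := (Fintype.card_coe B).symm
      _ ≤ k := hdim ▸ hind.fintype_card_le_finrank
  exact ⟨hcone,
    Nat.le_log_of_pow_le one_lt_two ((two_pow_card_support_le_prod_succ m).trans hcone)⟩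

/-- **Cone-closed basis implies low-cone and low-support concentration.**
If a polynomial `f` over a `k`-dimensional vector space `V` (represented as a
finitely supported function from exponent vectors to `V`) has a cone-closed
basis `B` of its coefficient span, then every monomial in `B` has cone-size at
most `k` and support size at most `⌊log₂ k⌋`. -/
theorem cone_closed_basis_low_cone_low_support
    (F : Type*) [Field F] (V : Type*) [AddCommGroup V] [Module F V]
    [FiniteDimensional F V] (k n : ℕ) (hk : 1 ≤ k)
    (hdim : Module.finrank F V = k)
    (f : (Fin n → ℕ) →₀ V) (B : Finset (Fin n → ℕ))
    (hclosed : ∀ m ∈ B, ∀ e : Fin n → ℕ, e ≤ m → e ∈ B)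
    (hind : LinearIndependent F (fun m : B => f m))
    (hspan : Submodule.span F (⇑f '' ↑B) = Submodule.span F (Set.range ⇑f)) :
    ∀ m ∈ B, (∏ i, (m i + 1)) ≤ k ∧
      (Finset.univ.filter fun i => 0 < m i).card ≤ Nat.log 2 k :=
  cone_closed_basis_low_cone_low_support_general F V k n hdim f B hclosed hind
end

section
/- Let F be a field, V an F-vector space, n a natural number, f a finitely supported function from exponent vectors in ℕ^n to V, and w ∈ ℕ^n a weight assignment with weight w(e) = ∑_i eᵢ·wᵢ on exponent vectors. Suppose B is a finite set of exponent vectors contained in the support of f such that: (i) the weights w(m) for m ∈ B are pairwise distinct; (ii) {f(m) : m ∈ B} is linearly independent over F and spans the F-linear span of all values of f; and (iii) for every m in the support of f with m ∉ B, f(m) lies in the F-span of {f(m′) : m′ ∈ B, w(m′) < w(m)}. Then for every finite set B′ of exponent vectors with B′ ≠ B such that {f(m) : m ∈ B′} is linearly independent and spans the F-linear span of all values of f, one has ∑_{m∈B} w(m) < ∑_{m∈B′} w(m); in particular, B is the unique basis of f of minimum total weight. -/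
/-!
Condition (iii), `SpannedFromBelow`, says that every nonzero coefficient is spanned by
coefficients in `B` of no larger weight. Hence for every threshold `t`, the coefficients of an
independent set `B'` of weight `< t` lie in the span of those of `B` of weight `< t`, so `B'` has
at most as many elements below every threshold as `B`. If `B' ≠ B` is another basis, it has the
size of `B` and contains some `m ∉ B`; at the threshold `w(m)` the count of `B'` is strictly
smaller, because `f(m)` is itself spanned by lighter elements of `B`. Summing over all thresholds,
via `∑_{m ∈ S} w(m) + ∑_{t ≤ N} #{m ∈ S | w(m) < t} = N · #S` for `N` bounding the weights on `S`,
turns this into `w(B) < w(B')`.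
-/

open Finset Submodule

section LayerCake

variable {α : Type*} {W : α → ℕ}

theorem sum_add_sum_card_filter_lt {S : Finset α} {N : ℕ} (hS : ∀ m ∈ S, W m ≤ N) :
    ∑ m ∈ S, W m + ∑ t ∈ range (N + 1), #{m ∈ S | W m < t} = #S * N := by
  have hcount : ∀ m ∈ S, W m + #{t ∈ range (N + 1) | W m < t} = N := by
    intro m hm
    have hIoc : {t ∈ range (N + 1) | W m < t} = Ioc (W m) N := by
      ext t
      simp only [mem_filter, mem_range, mem_Ioc]
      omega
    rw [hIoc, Nat.card_Ioc]
    have := hS m hm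
    omega
  have hswap : ∑ t ∈ range (N + 1), #{m ∈ S | W m < t} =
      ∑ m ∈ S, #{t ∈ range (N + 1) | W m < t} :=
    (sum_card_bipartiteAbove_eq_sum_card_bipartiteBelow (r := fun m t => W m < t)).symm
  rw [hswap, ← sum_add_distrib, sum_congr rfl hcount, sum_const, smul_eq_mul]

theorem sum_lt_sum_of_card_filter_lt {S T : Finset α} (hcard : #T = #S)
    (hle : ∀ t, #{m ∈ T | W m < t} ≤ #{m ∈ S | W m < t}) {t₀ : ℕ}
    (hlt : #{m ∈ T | W m < t₀} < #{m ∈ S | W m < t₀}) :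
    ∑ m ∈ S, W m < ∑ m ∈ T, W m := by
  set N := S.sup W ⊔ T.sup W
  have hS : ∀ m ∈ S, W m ≤ N := fun m hm => le_sup_of_le_left (le_sup hm)
  have hT : ∀ m ∈ T, W m ≤ N := fun m hm => le_sup_of_le_right (le_sup hm)
  have ht₀ : t₀ ∈ range (N + 1) := by
    by_contra! h
    rw [mem_range, not_lt] at h
    rw [filter_true_of_mem fun m hm => (hT m hm).trans_lt h,
      filter_true_of_mem fun m hm => (hS m hm).trans_lt h] at hlt
    omega
  have hcounts : ∑ t ∈ range (N + 1), #{m ∈ T | W m < t} <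
      ∑ t ∈ range (N + 1), #{m ∈ S | W m < t} :=
    sum_lt_sum (fun t _ => hle t) ⟨t₀, ht₀, hlt⟩
  have hcakeS := sum_add_sum_card_filter_lt hS
  have hcakeT := sum_add_sum_card_filter_lt hT
  rw [hcard] at hcakeT
  omega

end LayerCake

theorem LinearIndependent.card_le_card_of_image_subset_span {R M α : Type*} [Ring R]
    [StrongRankCondition R] [AddCommGroup M] [Module R M] {f : α → M} {s t : Finset α}
    (hs : LinearIndependent R (fun m : s => f m)) (hst : f '' s ⊆ span R (f '' t)) :
    #s ≤ #t := by
  classical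
  have h := linearIndependent_le_span' _ hs (t.image f) <| by
    rw [coe_image]
    exact Set.range_subset_iff.2 fun m => hst ⟨m, m.2, rfl⟩
  simp only [Cardinal.mk_coe_finset, coe_sort_coe, Fintype.card_coe, Nat.cast_le] at h
  exact h.trans card_image_le

section SpannedFromBelow

variable {F V α β : Type*} [DivisionRing F] [AddCommGroup V] [Module F V] [Preorder β]

variable (F) in
def SpannedFromBelow (f : α → V) (W : α → β) (B : Finset α) : Prop :=
  ∀ m, f m ≠ 0 → m ∉ B → f m ∈ span F (f '' {b | b ∈ B ∧ W b < W m})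

variable {f : α → V} {W : α → β} {B : Finset α}

theorem SpannedFromBelow.mem_span_image_weight_le (hiso : SpannedFromBelow F f W B) {m : α}
    (hm : f m ≠ 0) : f m ∈ span F (f '' {b | b ∈ B ∧ W b ≤ W m}) := by
  by_cases hmB : m ∈ B
  · exact subset_span ⟨m, ⟨hmB, le_rfl⟩, rfl⟩
  · exact span_mono (Set.image_mono fun _ => And.imp_right le_of_lt) (hiso m hm hmB)

theorem SpannedFromBelow.image_subset_span (hiso : SpannedFromBelow F f W B) {S : Finset α}
    (hS : ∀ m ∈ S, f m ≠ 0) : f '' S ⊆ span F (f '' B) := by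
  rintro _ ⟨m, hm, rfl⟩
  exact span_mono (Set.image_mono fun _ => And.left) (hiso.mem_span_image_weight_le (hS m hm))

variable [DecidableLT β]

theorem SpannedFromBelow.image_filter_weight_lt_subset_span (hiso : SpannedFromBelow F f W B)
    {S : Finset α} (hS : ∀ m ∈ S, f m ≠ 0) (t : β) :
    f '' ↑({m ∈ S | W m < t} : Finset α) ⊆ span F (f '' ↑({b ∈ B | W b < t} : Finset α)) := by
  rintro _ ⟨m, hm, rfl⟩
  rw [coe_filter] at hm
  refine span_mono (Set.image_mono ?_) (hiso.mem_span_image_weight_le (hS m hm.1))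
  rintro b ⟨hb, hbm⟩
  rw [coe_filter]
  exact ⟨hb, hbm.trans_lt hm.2⟩

theorem SpannedFromBelow.card_filter_weight_lt_le (hiso : SpannedFromBelow F f W B)
    {S : Finset α} (hS : LinearIndependent F (fun m : S => f m)) (t : β) :
    #{m ∈ S | W m < t} ≤ #{b ∈ B | W b < t} :=
  (hS.comp _ (Set.inclusion_injective (filter_subset _ S))).card_le_card_of_image_subset_span
    (hiso.image_filter_weight_lt_subset_span (fun m hm => hS.ne_zero ⟨m, hm⟩) t)

theorem SpannedFromBelow.card_filter_weight_lt_lt (hiso : SpannedFromBelow F f W B)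
    {S : Finset α} (hS : LinearIndependent F (fun m : S => f m)) {m : α} (hmS : m ∈ S)
    (hmB : m ∉ B) :
    #{m' ∈ S | W m' < W m} < #{b ∈ B | W b < W m} := by
  classical
  have hm : m ∉ ({m' ∈ S | W m' < W m} : Finset α) := fun h => lt_irrefl _ (mem_filter.1 h).2
  rw [Nat.lt_iff_add_one_le, ← card_insert_of_notMem hm]
  refine (hS.comp _ (Set.inclusion_injective (insert_subset hmS (filter_subset _ S)))
    ).card_le_card_of_image_subset_span ?_
  rw [coe_insert, Set.image_insert_eq, Set.insert_subset_iff]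
  refine ⟨?_, hiso.image_filter_weight_lt_subset_span (fun m hm => hS.ne_zero ⟨m, hm⟩) _⟩
  rw [coe_filter]
  exact hiso m (hS.ne_zero ⟨m, hmS⟩) hmB

end SpannedFromBelow

theorem basis_isolating_least_basis_unique_general
    (F : Type*) [Field F] (V : Type*) [AddCommGroup V] [Module F V]
    (n : ℕ) (f : (Fin n → ℕ) →₀ V) (w : Fin n → ℕ)
    (B : Finset (Fin n → ℕ))
    (hind : LinearIndependent F (fun m : B => f m))
    (hiso : ∀ m ∈ f.support, m ∉ B →
      f m ∈ Submodule.span F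
        (⇑f '' {m' | m' ∈ B ∧ (∑ i, m' i * w i) < (∑ i, m i * w i)})) :
    ∀ B' : Finset (Fin n → ℕ), B' ≠ B →
      LinearIndependent F (fun m : B' => f m) →
      Submodule.span F (⇑f '' ↑B') = Submodule.span F (Set.range ⇑f) →
      (∑ m ∈ B, ∑ i, m i * w i) < ∑ m ∈ B', ∑ i, m i * w i := by
  intro B' hne hind' hspan'
  have hiso' : SpannedFromBelow F f (fun m => ∑ i, m i * w i) B :=
    fun m hm => hiso m (Finsupp.mem_support_iff.2 hm)
  have hcard : #B' = #B := le_antisymm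
    (hind'.card_le_card_of_image_subset_span
      (hiso'.image_subset_span fun m hm => hind'.ne_zero ⟨m, hm⟩))
    (hind.card_le_card_of_image_subset_span
      (hspan' ▸ (Set.image_subset_range _ _).trans subset_span))
  obtain ⟨m, hmB', hmB⟩ := not_subset.1 fun h => hne (eq_of_subset_of_card_le h hcard.ge)
  exact sum_lt_sum_of_card_filter_lt hcard (hiso'.card_filter_weight_lt_le hind')
    (hiso'.card_filter_weight_lt_lt hind' hmB' hmB)

/-- **Uniqueness of the least basis under a basis isolating weight assignment.**
If `w` is a basis isolating weight assignment for `f` (witnessed by the basis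
`B`), then every other basis `B'` of the coefficient span of `f` has strictly
larger total weight; in particular `B` is the unique minimum-weight basis. -/
theorem basis_isolating_least_basis_unique
    (F : Type*) [Field F] (V : Type*) [AddCommGroup V] [Module F V]
    (n : ℕ) (f : (Fin n → ℕ) →₀ V) (w : Fin n → ℕ)
    (B : Finset (Fin n → ℕ)) (hBsupp : B ⊆ f.support)
    (hdist : ∀ m ∈ B, ∀ m' ∈ B, (∑ i, m i * w i) = (∑ i, m' i * w i) → m = m')
    (hind : LinearIndependent F (fun m : B => f m))
    (hspan : Submodule.span F (⇑f '' ↑B) = Submodule.span F (Set.range ⇑f))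
    (hiso : ∀ m ∈ f.support, m ∉ B →
      f m ∈ Submodule.span F
        (⇑f '' {m' | m' ∈ B ∧ (∑ i, m' i * w i) < (∑ i, m i * w i)})) :
    ∀ B' : Finset (Fin n → ℕ), B' ≠ B →
      LinearIndependent F (fun m : B' => f m) →
      Submodule.span F (⇑f '' ↑B') = Submodule.span F (Set.range ⇑f) →
      (∑ m ∈ B, ∑ i, m i * w i) < ∑ m ∈ B', ∑ i, m i * w i :=
  basis_isolating_least_basis_unique_general F V n f w B hind hiso
end

section
/- Let n ≥ 1 and let B be a finite set of exponent vectors in ℕ^n. Then there exists a cone-closed finite set A of exponent vectors in ℕ^n with |A| = |B| such that the square matrix over ℚ with rows indexed by a ∈ A, columns indexed by b ∈ B, and (a,b)-entry T(a,b) = ∏_{i=1}^{n} C(bᵢ, aᵢ) (the product of binomial coefficients, viewed as a rational number) is invertible; consequently the same matrix is invertible over any field of characteristic zero. -/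
/-!
View the row of exponent `a` as the function `b ↦ ∏ᵢ C(bᵢ, aᵢ)` on `B`, and pick `A` greedily
in lexicographic order: `a ∈ A` iff its row is not in the span of the rows of lex-smaller
exponents. These rows are independent and span all rows. All rows together span `K^B`: their
span contains the row of `0`, which is `1`, and by `x C(x, k) = (k + 1) C(x, k + 1) + k C(x, k)`
it is stable under multiplication by the coordinate functions, which separate the points of `B`.
The same identity writes the row of `a + eᵢ` through the row of `a` and rows below `a + eᵢ`, so
`a ∉ A` forces `a + eᵢ ∉ A`: the set `A` is cone-closed.
-/

open Finset Submodule

section Greedy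

variable (K : Type*) {V ι : Type*} [DivisionRing K] [AddCommGroup V] [Module K V]

def greedyIndices [LinearOrder ι] (v : ι → V) : Set ι :=
  {a | v a ∉ span K (v '' Set.Iio a)}

variable {K}

theorem linearIndepOn_greedyIndices [LinearOrder ι] (v : ι → V) :
    LinearIndepOn K v (greedyIndices K v) := by
  have hfin : ∀ s : Finset ι, ↑s ⊆ greedyIndices K v → LinearIndepOn K v s := by
    intro s
    induction s using Finset.induction_on_max with
    | empty => simp
    | insert a s hlt ih =>
      intro hs
      rw [coe_insert, Set.insert_subset_iff] at hs
      rw [coe_insert, linearIndepOn_insert fun has => (hlt a has).false]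
      exact ⟨ih hs.2, fun hspan => hs.1 (span_mono (Set.image_mono fun x hx => hlt x hx) hspan)⟩
  refine linearIndepOn_of_finite _ fun t ht htfin => ?_
  simpa using hfin htfin.toFinset (by simpa using ht)

theorem span_image_greedyIndices [LinearOrder ι] [WellFoundedLT ι] (v : ι → V) :
    span K (v '' greedyIndices K v) = span K (Set.range v) := by
  refine le_antisymm (span_mono (Set.image_subset_range _ _)) (span_le.2 ?_)
  rintro _ ⟨a, rfl⟩
  induction a using WellFoundedLT.induction with
  | ind a ih =>
    by_cases ha : a ∈ greedyIndices K v
    · exact subset_span ⟨a, ha, rfl⟩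
    · refine span_le.2 ?_ (not_not.1 ha)
      rintro _ ⟨c, hc, rfl⟩
      exact ih c hc

theorem add_notMem_greedyIndices [AddCommMonoid ι] [LinearOrder ι] [IsOrderedCancelAddMonoid ι]
    {v : ι → V} {d : ι} (hd : 0 < d) (μ : V →ₗ[K] V) (α β : ι → K) (hα : ∀ a, α a ≠ 0)
    (hμ : ∀ a, μ (v a) = α a • v (a + d) + β a • v a) {a : ι} (ha : a ∉ greedyIndices K v) :
    a + d ∉ greedyIndices K v := by
  set W := span K (v '' Set.Iio (a + d))
  have had : a < a + d := lt_add_of_pos_right a hd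
  have hle : span K (v '' Set.Iio a) ≤ W :=
    span_mono (Set.image_mono fun c hc => lt_trans hc had)
  have hva : v a ∈ span K (v '' Set.Iio a) := not_not.1 ha
  have hμW : map μ (span K (v '' Set.Iio a)) ≤ W := by
    rw [map_span_le]
    rintro _ ⟨c, hc, rfl⟩
    rw [hμ]
    refine add_mem (smul_mem _ _ (subset_span ⟨c + d, ?_, rfl⟩)) (smul_mem _ _ (hle ?_))
    · exact add_lt_add_left hc d
    · exact subset_span ⟨c, hc, rfl⟩
  have hsolve : v (a + d) = (α a)⁻¹ • (μ (v a) - β a • v a) := by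
    rw [hμ, add_sub_cancel_right, smul_smul, inv_mul_cancel₀ (hα a), one_smul]
  suffices v (a + d) ∈ W from not_not.2 this
  rw [hsolve]
  exact smul_mem _ _ (sub_mem (hμW ⟨v a, hva, rfl⟩) (smul_mem _ _ (hle hva)))

end Greedy

theorem Nat.mul_choose_eq (x k : ℕ) :
    x * x.choose k = (k + 1) * x.choose (k + 1) + k * x.choose k := by
  rcases le_or_gt k x with hkx | hxk
  · rw [mul_comm (k + 1), Nat.choose_succ_right_eq, mul_comm (x.choose k), ← Nat.add_mul,
      Nat.sub_add_cancel hkx]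
  · simp [Nat.choose_eq_zero_of_lt hxk, Nat.choose_eq_zero_of_lt (hxk.trans k.lt_succ_self)]

theorem mul_prod_choose_eq {σ : Type*} [Fintype σ] [DecidableEq σ] (x a : σ → ℕ) (i : σ) :
    x i * ∏ j, (x j).choose (a j) =
      (a i + 1) * ∏ j, (x j).choose ((a + Pi.single i 1 : σ → ℕ) j) +
        a i * ∏ j, (x j).choose (a j) := by
  have hrest : ∏ j ∈ {i}ᶜ, (x j).choose ((a + Pi.single i 1 : σ → ℕ) j) =
      ∏ j ∈ {i}ᶜ, (x j).choose (a j) :=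
    prod_congr rfl fun j hj => by
      rw [Pi.add_apply, Pi.single_eq_of_ne (by simpa using hj), add_zero]
  rw [Fintype.prod_eq_mul_prod_compl i, Fintype.prod_eq_mul_prod_compl i, hrest]
  simp only [Pi.add_apply, Pi.single_eq_same]
  calc x i * ((x i).choose (a i) * ∏ j ∈ {i}ᶜ, (x j).choose (a j))
      = (x i * (x i).choose (a i)) * ∏ j ∈ {i}ᶜ, (x j).choose (a j) := by ring
    _ = _ := by rw [Nat.mul_choose_eq]; ring

theorem Submodule.eq_top_of_one_mem_of_mul_mem {K X ι : Type*} [Field K] [Fintype X]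
    [DecidableEq X] {g : ι → X → K} (hsep : ∀ x y, x ≠ y → ∃ j, g j x ≠ g j y)
    {S : Submodule K (X → K)} (h1 : 1 ∈ S) (hmul : ∀ j, ∀ f ∈ S, g j * f ∈ S) : S = ⊤ := by
  have hpeak : ∀ p (Q : Finset X), p ∉ Q → ∃ f ∈ S, f p = 1 ∧ ∀ q ∈ Q, f q = 0 := by
    intro p Q
    induction Q using Finset.induction_on with
    | empty => exact fun _ => ⟨1, h1, rfl, by simp⟩
    | insert q Q _ ih =>
      intro hp
      rw [mem_insert, not_or] at hp
      obtain ⟨f, hfS, hfp, hfQ⟩ := ih hp.2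
      obtain ⟨j, hj⟩ := hsep p q hp.1
      -- multiplying by `g j - g j q` kills the value at `q` but not at `p`
      refine ⟨(g j p - g j q)⁻¹ • (g j * f - g j q • f),
        smul_mem _ _ (sub_mem (hmul j f hfS) (smul_mem _ _ hfS)), ?_, ?_⟩
      · simp [hfp, sub_ne_zero.2 hj]
      · simp +contextual [hfQ]
  rw [eq_top_iff, ← (Pi.basisFun K X).span_eq, span_le]
  rintro _ ⟨p, rfl⟩
  obtain ⟨f, hfS, hfp, hfQ⟩ := hpeak p (univ.erase p) (notMem_erase p _)
  have hf : f = Pi.basisFun K X p := by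
    funext q
    rw [Pi.basisFun_apply, Pi.single_apply]
    split_ifs with hqp
    · rw [hqp, hfp]
    · exact hfQ q (mem_erase.2 ⟨hqp, mem_univ q⟩)
  exact hf ▸ hfS

section BinomialRows

variable (K : Type*) [Field K] {σ : Type*} [Fintype σ] (B : Finset (σ → ℕ))

def binomialRow (a : σ → ℕ) : B → K :=
  fun b => ((∏ i, ((b : σ → ℕ) i).choose (a i) : ℕ) : K)

def coordFun (i : σ) : B → K :=
  fun b => ((b : σ → ℕ) i : K)

def lexGreedyExponents [LinearOrder σ] : Set (σ → ℕ) :=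
  ofLex '' greedyIndices K (binomialRow K B ∘ ofLex)

variable {K B}

theorem binomialRow_zero : binomialRow K B 0 = 1 := by
  funext b
  simp [binomialRow]

theorem coordFun_mul_binomialRow [DecidableEq σ] (a : σ → ℕ) (i : σ) :
    coordFun K B i * binomialRow K B a =
      ((a i : K) + 1) • binomialRow K B (a + Pi.single i 1) + (a i : K) • binomialRow K B a := by
  funext b
  have h := congrArg (Nat.cast : ℕ → K) (mul_prod_choose_eq (b : σ → ℕ) a i)
  push_cast at h
  simpa [binomialRow, coordFun] using h

theorem linearIndepOn_lexGreedyExponents [LinearOrder σ] :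
    LinearIndepOn K (binomialRow K B) (lexGreedyExponents K B) :=
  (linearIndepOn_greedyIndices _).image_of_comp _ _

variable [CharZero K]

theorem span_range_binomialRow : span K (Set.range (binomialRow K B)) = ⊤ := by
  classical
  refine eq_top_of_one_mem_of_mul_mem (X := B) (g := coordFun K B) ?_ ?_ fun i f hf => ?_
  · intro x y hxy
    obtain ⟨i, hi⟩ := Function.ne_iff.1 (Subtype.coe_ne_coe.2 hxy)
    exact ⟨i, by simpa [coordFun] using hi⟩
  · exact binomialRow_zero (K := K) (B := B) ▸ subset_span ⟨0, rfl⟩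
  · refine (map_span_le (LinearMap.mulLeft K (coordFun K B i)) _ _).2 ?_ ⟨f, hf, rfl⟩
    rintro _ ⟨a, rfl⟩
    rw [LinearMap.mulLeft_apply, coordFun_mul_binomialRow]
    exact add_mem (smul_mem _ _ (subset_span ⟨_, rfl⟩)) (smul_mem _ _ (subset_span ⟨_, rfl⟩))

variable [LinearOrder σ]

theorem span_image_lexGreedyExponents :
    span K (binomialRow K B '' lexGreedyExponents K B) = ⊤ := by
  rw [lexGreedyExponents, ← Set.image_comp, span_image_greedyIndices,
    ofLex.surjective.range_comp, span_range_binomialRow]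

theorem add_single_notMem_lexGreedyExponents {e : σ → ℕ} (i : σ)
    (he : e ∉ lexGreedyExponents K B) : e + Pi.single i 1 ∉ lexGreedyExponents K B := by
  rw [lexGreedyExponents, Set.mem_image_equiv] at he ⊢
  exact add_notMem_greedyIndices (Pi.toLex_strictMono (Pi.single_pos.2 one_pos))
    (LinearMap.mulLeft K (coordFun K B i)) (fun a : Lex (σ → ℕ) => (ofLex a i : K) + 1)
    (fun a => (ofLex a i : K))
    (fun _ => Nat.cast_add_one_ne_zero _) (fun a => coordFun_mul_binomialRow (ofLex a) i) he

theorem isLowerSet_lexGreedyExponents : IsLowerSet (lexGreedyExponents K B) := by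
  suffices h : ∀ d e, e ∉ lexGreedyExponents K B → e + d ∉ lexGreedyExponents K B by
    intro m e hem hm
    by_contra he
    exact h (m - e) e he (by rwa [add_tsub_cancel_of_le hem])
  intro d
  induction d using Pi.single_induction with
  | zero => simp
  | add f g hf hg => exact fun e he => add_assoc e f g ▸ hg _ (hf e he)
  | single i m =>
    induction m with
    | zero => simp
    | succ m ih =>
      intro e he
      rw [Pi.single_add, ← add_assoc]
      exact add_single_notMem_lexGreedyExponents i (ih e he)

end BinomialRows

theorem exists_isLowerSet_basis_binomialRow (K : Type*) [Field K] [CharZero K] {σ : Type*}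
    [Fintype σ] [LinearOrder σ] (B : Finset (σ → ℕ)) :
    ∃ A : Finset (σ → ℕ), IsLowerSet (A : Set (σ → ℕ)) ∧
      ∃ b : Module.Basis A K (B → K), ∀ a, b a = binomialRow K B a := by
  have hli := linearIndepOn_lexGreedyExponents (K := K) (B := B)
  have : Finite (lexGreedyExponents K B) := hli.finite
  set A := (lexGreedyExponents K B).toFinite.toFinset
  have hA : (A : Set (σ → ℕ)) = lexGreedyExponents K B := Set.Finite.coe_toFinset _
  have hliA : LinearIndepOn K (binomialRow K B) (A : Set (σ → ℕ)) := hA ▸ hli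
  have hspanA : ⊤ ≤ span K (Set.range fun a : (A : Set (σ → ℕ)) => binomialRow K B a) := by
    rw [← Set.image_eq_range, hA, span_image_lexGreedyExponents]
  exact ⟨A, hA ▸ isLowerSet_lexGreedyExponents, .mk hliA hspanA, Module.Basis.mk_apply _ _⟩

theorem Module.Basis.exists_two_sided_inverse_of_rows {K ι κ : Type*} [Field K] [Fintype ι]
    [Fintype κ] [DecidableEq ι] [DecidableEq κ] (b : Module.Basis ι K (κ → K)) :
    ∃ N : Matrix κ ι K,
      Matrix.of (fun i k => b i k) * N = 1 ∧ N * Matrix.of (fun i k => b i k) = 1 := by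
  have hrows : Matrix.of (fun i k => b i k) = ((Pi.basisFun K κ).toMatrix b).transpose := by
    ext i k
    simp [Module.Basis.toMatrix_apply]
  refine ⟨(b.toMatrix (Pi.basisFun K κ)).transpose, ?_, ?_⟩ <;>
    rw [hrows, ← Matrix.transpose_mul, Module.Basis.toMatrix_mul_toMatrix_flip,
      Matrix.transpose_one]

theorem Matrix.map_mul_eq_one {R S m n : Type*} [Semiring R] [Semiring S] [Fintype n]
    [DecidableEq m] (f : R →+* S) {M : Matrix m n R} {N : Matrix n m R} (h : M * N = 1) :
    M.map f * N.map f = 1 := by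
  rw [← Matrix.map_mul, h, Matrix.map_one f (map_zero f) (map_one f)]

theorem cone_closed_transfer_matrix_invertible_general
    (n : ℕ) (B : Finset (Fin n → ℕ)) :
    ∃ A : Finset (Fin n → ℕ),
      (∀ m ∈ A, ∀ e : Fin n → ℕ, e ≤ m → e ∈ A) ∧
      A.card = B.card ∧
      (∃ N : Matrix B A ℚ,
        (Matrix.of fun (a : A) (b : B) =>
            ((∏ i, ((b : Fin n → ℕ) i).choose ((a : Fin n → ℕ) i) : ℕ) : ℚ)) * N = 1 ∧
        N * (Matrix.of fun (a : A) (b : B) =>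
            ((∏ i, ((b : Fin n → ℕ) i).choose ((a : Fin n → ℕ) i) : ℕ) : ℚ)) = 1) ∧
      (∀ (K : Type) (_ : Field K) (_ : CharZero K),
        ∃ N : Matrix B A K,
          (Matrix.of fun (a : A) (b : B) =>
              ((∏ i, ((b : Fin n → ℕ) i).choose ((a : Fin n → ℕ) i) : ℕ) : K)) * N = 1 ∧
          N * (Matrix.of fun (a : A) (b : B) =>
              ((∏ i, ((b : Fin n → ℕ) i).choose ((a : Fin n → ℕ) i) : ℕ) : K)) = 1) := by
  obtain ⟨A, hA, rows, hrows⟩ := exists_isLowerSet_basis_binomialRow ℚ B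
  set T : Matrix A B ℚ := Matrix.of fun a b =>
    ((∏ i, ((b : Fin n → ℕ) i).choose ((a : Fin n → ℕ) i) : ℕ) : ℚ)
  have hT : T = Matrix.of fun a b => rows a b := by
    ext a b
    simp [T, hrows, binomialRow]
  obtain ⟨N, hTN, hNT⟩ := rows.exists_two_sided_inverse_of_rows
  rw [← hT] at hTN hNT
  have hcard : A.card = B.card := by
    rw [← Fintype.card_coe, ← Fintype.card_coe B, ← Module.finrank_eq_card_basis rows,
      Module.finrank_fintype_fun_eq_card]
  refine ⟨A, fun m hm e he => hA he hm, hcard, ⟨N, hTN, hNT⟩, fun K _ _ => ?_⟩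
  have hTK : (Matrix.of fun (a : A) (b : B) =>
      ((∏ i, ((b : Fin n → ℕ) i).choose ((a : Fin n → ℕ) i) : ℕ) : K)) = T.map (Rat.castHom K) := by
    ext a b
    simp [T]
  rw [hTK]
  exact ⟨N.map (Rat.castHom K), Matrix.map_mul_eq_one _ hTN, Matrix.map_mul_eq_one _ hNT⟩

/-- **Cone-closed full-rank transfer (Find-Cone-Closed).** For every finite set `B`
of exponent vectors in `ℕ^n` there is a cone-closed finite set `A` of the same
cardinality such that the transfer matrix `T(a,b) = ∏ᵢ C(bᵢ, aᵢ)` is invertible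
over `ℚ`, and consequently over any field of characteristic zero. -/
theorem cone_closed_transfer_matrix_invertible
    (n : ℕ) (hn : 1 ≤ n) (B : Finset (Fin n → ℕ)) :
    ∃ A : Finset (Fin n → ℕ),
      (∀ m ∈ A, ∀ e : Fin n → ℕ, e ≤ m → e ∈ A) ∧
      A.card = B.card ∧
      (∃ N : Matrix B A ℚ,
        (Matrix.of fun (a : A) (b : B) =>
            ((∏ i, ((b : Fin n → ℕ) i).choose ((a : Fin n → ℕ) i) : ℕ) : ℚ)) * N = 1 ∧
        N * (Matrix.of fun (a : A) (b : B) =>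
            ((∏ i, ((b : Fin n → ℕ) i).choose ((a : Fin n → ℕ) i) : ℕ) : ℚ)) = 1) ∧
      (∀ (K : Type) (_ : Field K) (_ : CharZero K),
        ∃ N : Matrix B A K,
          (Matrix.of fun (a : A) (b : B) =>
              ((∏ i, ((b : Fin n → ℕ) i).choose ((a : Fin n → ℕ) i) : ℕ) : K)) * N = 1 ∧
          N * (Matrix.of fun (a : A) (b : B) =>
              ((∏ i, ((b : Fin n → ℕ) i).choose ((a : Fin n → ℕ) i) : ℕ) : K)) = 1) :=
  cone_closed_transfer_matrix_invertible_general n B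
end

section
/- Let n ≥ 1. There exists a map Φ assigning to every finite set B of exponent vectors in ℕ^n a finite set Φ(B) of exponent vectors in ℕ^n such that: (i) Φ(B) is cone-closed; (ii) |Φ(B)| = |B|; (iii) the square matrix over ℚ with rows indexed by a ∈ Φ(B), columns indexed by b ∈ B, and (a,b)-entry ∏_{i=1}^{n} C(bᵢ, aᵢ) is invertible; and (iv) Φ is monotone, i.e., for all finite sets B ⊆ B′ of exponent vectors, Φ(B) ⊆ Φ(B′). -/
/-!
Let `W(B)` be the span of the coefficient vectors of `∏ᵢ (1 + xᵢ) ^ bᵢ`, `b ∈ B`, and let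
`Φ(B)` be the set of lex-lowest exponents of nonzero elements of `W(B)`. Vectors with distinct
lowest exponents are independent, and a vector of `W(B)` vanishing on `Φ(B)` is zero; hence
`|Φ(B)| = dim W(B) = |B|`, and the transfer matrix, which restricts a basis of `W(B)` to the
coordinates in `Φ(B)`, is invertible. Monotonicity holds because `W(B)` grows with `B`.
Each generator is an eigenvector of `(1 + xᵢ) ∂/∂xᵢ`, so `W(B)` is stable under it, and this
operator turns a lowest exponent `a` with `aᵢ ≠ 0` into `a - eᵢ`; thus `Φ(B)` is cone-closed.
-/

open Finset Function Module

section LowestExponents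

variable {α β K : Type*} [LinearOrder β] [Field K] (κ : α → β)

/-- `κ` encodes the monomial order: exponents are compared through their keys in `β`. -/
def IsLowestExponent (f : α →₀ K) (a : α) : Prop :=
  a ∈ f.support ∧ ∀ m ∈ f.support, κ a ≤ κ m

def lowestExponents (W : Submodule K (α →₀ K)) : Set α :=
  {a | ∃ f ∈ W, IsLowestExponent κ f a}

variable {κ}

theorem exists_isLowestExponent {f : α →₀ K} (hf : f ≠ 0) : ∃ a, IsLowestExponent κ f a :=
  exists_min_image f.support κ (Finsupp.support_nonempty_iff.2 hf)

theorem linearIndependent_of_isLowestExponent {ι : Type*} {F : ι → α →₀ K} {e : ι → α}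
    (he : Injective (κ ∘ e)) (hF : ∀ i, IsLowestExponent κ (F i) (e i)) :
    LinearIndependent K F := by
  classical
  rw [linearIndependent_iff']
  intro s g hsum i hi
  by_contra hgi
  obtain ⟨j, hj, hmin⟩ :=
    exists_min_image {i ∈ s | g i ≠ 0} (κ ∘ e) ⟨i, mem_filter.2 ⟨hi, hgi⟩⟩
  rw [mem_filter] at hj
  -- `j` minimizes `κ ∘ e` where `g ≠ 0`, so no other `F k` with `g k ≠ 0` reaches down to `e j`.
  have hsingle : (∑ k ∈ s, g k • F k) (e j) = g j * F j (e j) := by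
    rw [Finsupp.finsetSum_apply, sum_eq_single_of_mem j hj.1]
    · rfl
    intro k hk hkj
    by_cases hgk : g k = 0
    · simp [hgk]
    by_contra hne
    have hle : κ (e k) ≤ κ (e j) :=
      (hF k).2 _ (Finsupp.mem_support_iff.2 (right_ne_zero_of_smul hne))
    exact hkj (he (le_antisymm hle (hmin k (mem_filter.2 ⟨hk, hgk⟩))))
  rw [hsum, Finsupp.zero_apply, eq_comm] at hsingle
  exact mul_ne_zero hj.2 (Finsupp.mem_support_iff.1 (hF j).1) hsingle

theorem lowestExponents_mono {W W' : Submodule K (α →₀ K)} (h : W ≤ W') :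
    lowestExponents κ W ⊆ lowestExponents κ W' :=
  fun _ ⟨f, hf, ha⟩ => ⟨f, h hf, ha⟩

theorem eq_zero_of_forall_lowestExponents {W : Submodule K (α →₀ K)} {f : α →₀ K} (hf : f ∈ W)
    (h : ∀ a ∈ lowestExponents κ W, f a = 0) : f = 0 := by
  by_contra hne
  obtain ⟨a, ha⟩ := exists_isLowestExponent (κ := κ) hne
  exact Finsupp.mem_support_iff.1 ha.1 (h a ⟨f, hf, ha⟩)

theorem exists_linearIndependent_lowestExponents (hκ : Injective κ) (W : Submodule K (α →₀ K)) :
    ∃ F : lowestExponents κ W → W, LinearIndependent K F := by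
  choose F hFW hF using fun a : lowestExponents κ W => a.2
  refine ⟨fun a => ⟨F a, hFW a⟩, LinearIndependent.of_comp W.subtype ?_⟩
  exact linearIndependent_of_isLowestExponent (hκ.comp Subtype.val_injective) hF

variable (κ) in
theorem lowestExponents_finite (hκ : Injective κ) (W : Submodule K (α →₀ K))
    [FiniteDimensional K W] : (lowestExponents κ W).Finite :=
  have ⟨_, hF⟩ := exists_linearIndependent_lowestExponents hκ W
  Set.finite_coe_iff.1 hF.finite

theorem ncard_lowestExponents (hκ : Injective κ) (W : Submodule K (α →₀ K))
    [FiniteDimensional K W] : (lowestExponents κ W).ncard = finrank K W := by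
  have : Fintype (lowestExponents κ W) := (lowestExponents_finite κ hκ W).fintype
  rw [← Nat.card_coe_set_eq, Nat.card_eq_fintype_card]
  apply le_antisymm
  · obtain ⟨_, hF⟩ := exists_linearIndependent_lowestExponents hκ W
    exact hF.fintype_card_le_finrank
  · have hinj : Injective
        ((LinearMap.pi fun a : lowestExponents κ W => Finsupp.lapply (a : α)) ∘ₗ W.subtype) := by
      refine (injective_iff_map_eq_zero _).2 fun f hf => ?_
      exact Subtype.ext <| eq_zero_of_forall_lowestExponents f.2 fun a ha => congrFun hf ⟨a, ha⟩
    simpa using LinearMap.finrank_le_finrank_of_injective hinj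

end LowestExponents

theorem isLowerSet_of_sub_single_mem {ι : Type*} [Finite ι] [DecidableEq ι] {s : Set (ι → ℕ)}
    (h : ∀ m ∈ s, ∀ i, m i ≠ 0 → m - Pi.single i 1 ∈ s) : IsLowerSet s := by
  intro m
  induction m using WellFoundedLT.induction with
  | _ m ih =>
    intro e hem hm
    obtain rfl | hlt := hem.eq_or_lt
    · exact hm
    obtain ⟨i, hi⟩ := (Pi.lt_def.1 hlt).2
    have hlt' : m - Pi.single i 1 < m :=
      Pi.lt_def.2 ⟨tsub_le_self, i, by simp only [Pi.sub_apply, Pi.single_eq_same]; omega⟩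
    refine ih _ hlt' (fun j => ?_) (h m hm i (by omega))
    rcases eq_or_ne j i with rfl | hji
    · simp only [Pi.sub_apply, Pi.single_eq_same]; omega
    · simpa [Pi.single_eq_of_ne hji] using hem j

theorem Nat.succ_mul_choose_succ_add_mul_choose (m k : ℕ) :
    (k + 1) * m.choose (k + 1) + k * m.choose k = m * m.choose k := by
  rw [mul_comm, Nat.choose_succ_right_eq]
  rcases le_or_gt k m with hkm | hmk
  · rw [mul_comm k, ← mul_add, Nat.sub_add_cancel hkm, mul_comm]
  · simp [Nat.choose_eq_zero_of_lt hmk]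

theorem Matrix.exists_mul_eq_one_of_injective_mulVec {m n K : Type*} [Fintype m] [Fintype n]
    [DecidableEq m] [DecidableEq n] [Field K] {M : Matrix m n K} (hM : Injective M.mulVec)
    (hcard : Fintype.card n = Fintype.card m) : ∃ N : Matrix n m K, M * N = 1 ∧ N * M = 1 := by
  let e := LinearMap.linearEquivOfInjective (Matrix.toLin' M) hM (by simpa using hcard)
  refine ⟨LinearMap.toMatrix' e.symm.toLinearMap, ?_, ?_⟩
  · conv_lhs => rw [← LinearMap.toMatrix'_toLin' M, ← LinearMap.toMatrix'_comp]
    rw [← LinearMap.toMatrix'_id]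
    exact congrArg _ (LinearMap.ext e.apply_symm_apply)
  · conv_lhs => rw [← LinearMap.toMatrix'_toLin' M, ← LinearMap.toMatrix'_comp]
    rw [← LinearMap.toMatrix'_id]
    exact congrArg _ (LinearMap.ext e.symm_apply_apply)

noncomputable section BinomialExpansion

variable {n : ℕ} (K : Type*) [Field K]

/-- The coefficients of `∏ᵢ (1 + xᵢ) ^ bᵢ`. -/
def binomialCoeffs (b : Fin n → ℕ) : (Fin n → ℕ) →₀ K :=
  Finsupp.onFinset (Iic b) (fun a => ((∏ i, (b i).choose (a i) : ℕ) : K)) fun a ha =>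
    mem_Iic.2 fun i => not_lt.1 fun hlt =>
      ha (by rw [prod_eq_zero (mem_univ i) (Nat.choose_eq_zero_of_lt hlt), Nat.cast_zero])

theorem binomialCoeffs_apply (b a : Fin n → ℕ) :
    binomialCoeffs K b a = ((∏ i, (b i).choose (a i) : ℕ) : K) :=
  rfl

def expansionSpan (B : Finset (Fin n → ℕ)) : Submodule K ((Fin n → ℕ) →₀ K) :=
  Submodule.span K (binomialCoeffs K '' B)

instance (B : Finset (Fin n → ℕ)) : FiniteDimensional K (expansionSpan K B) :=
  FiniteDimensional.span_of_finite K (B.finite_toSet.image _)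

/-- The operator `(1 + xᵢ) ∂/∂xᵢ` on coefficient vectors. -/
def binomialDeriv (i : Fin n) : ((Fin n → ℕ) →₀ K) →ₗ[K] (Fin n → ℕ) →₀ K where
  toFun f := Finsupp.onFinset (f.support ∪ f.support.image (· - Pi.single i 1))
    (fun m => ((m i : K) + 1) * f (m + Pi.single i 1) + m i * f m) fun m hm => by
      by_cases hfm : f m = 0
      · have hfm' : f (m + Pi.single i 1) ≠ 0 := fun h => hm (by rw [h, hfm]; ring)
        exact mem_union_right _
          (mem_image.2 ⟨_, Finsupp.mem_support_iff.2 hfm', add_tsub_cancel_right _ _⟩)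
      · exact mem_union_left _ (Finsupp.mem_support_iff.2 hfm)
  map_add' f g := by
    ext m
    simp only [Finsupp.onFinset_apply, Finsupp.add_apply]
    ring
  map_smul' c f := by
    ext m
    simp only [Finsupp.onFinset_apply, Finsupp.smul_apply, smul_eq_mul, RingHom.id_apply]
    ring

theorem binomialDeriv_apply (i : Fin n) (f : (Fin n → ℕ) →₀ K) (m : Fin n → ℕ) :
    binomialDeriv K i f m = ((m i : K) + 1) * f (m + Pi.single i 1) + m i * f m :=
  rfl

theorem binomialDeriv_binomialCoeffs (i : Fin n) (b : Fin n → ℕ) :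
    binomialDeriv K i (binomialCoeffs K b) = (b i : K) • binomialCoeffs K b := by
  ext a
  have hrest : ∏ j ∈ {i}ᶜ, (b j).choose ((a + Pi.single i 1 : Fin n → ℕ) j) =
      ∏ j ∈ {i}ᶜ, (b j).choose (a j) :=
    prod_congr rfl fun j hj => by
      rw [Pi.add_apply, Pi.single_eq_of_ne (mem_compl.1 hj ∘ mem_singleton.2), add_zero]
  have hi : ((a i : K) + 1) * ((b i).choose (a i + 1) : K) + (a i : K) * ((b i).choose (a i) : K)
      = (b i : K) * ((b i).choose (a i) : K) := by
    have h := congrArg (Nat.cast : ℕ → K) (Nat.succ_mul_choose_succ_add_mul_choose (b i) (a i))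
    push_cast at h
    exact h
  simp only [binomialDeriv_apply, binomialCoeffs_apply, Finsupp.smul_apply, smul_eq_mul]
  rw [Fintype.prod_eq_mul_prod_compl i,
    Fintype.prod_eq_mul_prod_compl i (fun j => (b j).choose (a j)), hrest, Pi.add_apply,
    Pi.single_eq_same]
  push_cast
  linear_combination (∏ j ∈ {i}ᶜ, ((b j).choose (a j) : K)) * hi

theorem binomialDeriv_mem_expansionSpan {B : Finset (Fin n → ℕ)} {f : (Fin n → ℕ) →₀ K}
    (hf : f ∈ expansionSpan K B) (i : Fin n) : binomialDeriv K i f ∈ expansionSpan K B := by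
  refine (Submodule.map_span_le _ _ _).2 ?_ (Submodule.mem_map_of_mem hf)
  rintro _ ⟨b, hb, rfl⟩
  rw [binomialDeriv_binomialCoeffs]
  exact Submodule.smul_mem _ _ (Submodule.subset_span ⟨b, hb, rfl⟩)

variable {K} in
theorem isLowestExponent_binomialDeriv [CharZero K] {f : (Fin n → ℕ) →₀ K} {a : Fin n → ℕ}
    (ha : IsLowestExponent toLex f a) {i : Fin n} (hi : a i ≠ 0) :
    IsLowestExponent toLex (binomialDeriv K i f) (a - Pi.single i 1) := by
  set e := a - Pi.single i 1
  have hea : e + Pi.single i 1 = a := by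
    funext j
    rcases eq_or_ne j i with rfl | hji
    · simp only [e, Pi.add_apply, Pi.sub_apply, Pi.single_eq_same]; omega
    · simp [e, Pi.single_eq_of_ne hji]
  have hle : e ≤ a := tsub_le_self
  have hfe : f e = 0 := by
    by_contra hfe
    refine (Pi.toLex_strictMono (hle.lt_of_ne fun h => ?_)).not_ge
      (ha.2 e (Finsupp.mem_support_iff.2 hfe))
    have := congrFun h i
    simp only [e, Pi.sub_apply, Pi.single_eq_same] at this
    omega
  refine ⟨Finsupp.mem_support_iff.2 ?_, fun m hm => ?_⟩
  · rw [binomialDeriv_apply, hea, hfe, mul_zero, add_zero]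
    exact mul_ne_zero (Nat.cast_add_one_ne_zero _) (Finsupp.mem_support_iff.1 ha.1)
  by_cases hfm : f m = 0
  · have hfm' : f (m + Pi.single i 1) ≠ 0 := fun h =>
      Finsupp.mem_support_iff.1 hm (by rw [binomialDeriv_apply, h, hfm]; ring)
    have := ha.2 _ (Finsupp.mem_support_iff.2 hfm')
    rwa [← hea, toLex_add, toLex_add, add_le_add_iff_right] at this
  · exact (Pi.toLex_monotone hle).trans (ha.2 m (Finsupp.mem_support_iff.2 hfm))

-- `b` is the lex-highest exponent of `binomialCoeffs K b`, hence lowest for the reversed order.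
theorem linearIndependent_binomialCoeffs : LinearIndependent K (binomialCoeffs K (n := n)) := by
  refine linearIndependent_of_isLowestExponent (κ := OrderDual.toDual ∘ toLex) (e := id)
    (OrderDual.toDual.injective.comp toLex.injective) fun b => ⟨?_, fun m hm => ?_⟩
  · simp [binomialCoeffs_apply]
  · exact OrderDual.toDual_le_toDual.2
      (Pi.toLex_monotone (mem_Iic.1 (Finsupp.support_onFinset_subset hm)))

theorem finrank_expansionSpan (B : Finset (Fin n → ℕ)) :
    finrank K (expansionSpan K B) = B.card := by
  have hB : LinearIndependent K
      (binomialCoeffs K ∘ (Subtype.val : ↥(B : Set (Fin n → ℕ)) → Fin n → ℕ)) :=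
    (linearIndependent_binomialCoeffs K).comp _ Subtype.val_injective
  rw [expansionSpan, ← Subtype.range_coe (s := (B : Set (Fin n → ℕ))), ← Set.range_comp,
    finrank_span_eq_card hB]
  simp

end BinomialExpansion

noncomputable section FindConeClosed

variable {n : ℕ} (K : Type*) [Field K]

def findConeClosed (B : Finset (Fin n → ℕ)) : Finset (Fin n → ℕ) :=
  (lowestExponents_finite toLex toLex.injective (expansionSpan K B)).toFinset

variable {K} in
theorem mem_findConeClosed {B : Finset (Fin n → ℕ)} {a : Fin n → ℕ} :
    a ∈ findConeClosed K B ↔ a ∈ lowestExponents toLex (expansionSpan K B) :=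
  Set.Finite.mem_toFinset _

theorem findConeClosed_mono {B B' : Finset (Fin n → ℕ)} (h : B ⊆ B') :
    findConeClosed K B ⊆ findConeClosed K B' := fun _ ha =>
  mem_findConeClosed.2 <| lowestExponents_mono
    (Submodule.span_mono (Set.image_mono (coe_subset.2 h))) (mem_findConeClosed.1 ha)

theorem isLowerSet_findConeClosed [CharZero K] (B : Finset (Fin n → ℕ)) :
    IsLowerSet (findConeClosed K B : Set (Fin n → ℕ)) := by
  rw [findConeClosed, Set.Finite.coe_toFinset]
  exact isLowerSet_of_sub_single_mem fun _ ⟨f, hf, ha⟩ _ hi =>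
    ⟨_, binomialDeriv_mem_expansionSpan K hf _, isLowestExponent_binomialDeriv ha hi⟩

theorem card_findConeClosed (B : Finset (Fin n → ℕ)) : (findConeClosed K B).card = B.card := by
  rw [findConeClosed, ← Set.ncard_eq_toFinset_card _ (lowestExponents_finite _ toLex.injective _),
    ncard_lowestExponents toLex.injective, finrank_expansionSpan]

/-- A nonzero vector of the span has its lex-lowest exponent in `findConeClosed K B`. -/
theorem linearIndependent_restrict_binomialCoeffs (B : Finset (Fin n → ℕ)) :
    LinearIndependent K fun (b : B) (a : findConeClosed K B) =>
      binomialCoeffs K (b : Fin n → ℕ) (a : Fin n → ℕ) := by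
  have hB : LinearIndependent K fun b : B => binomialCoeffs K (b : Fin n → ℕ) :=
    (linearIndependent_binomialCoeffs K).comp _ Subtype.val_injective
  refine hB.map
    (f := LinearMap.pi fun a : findConeClosed K B => Finsupp.lapply (a : Fin n → ℕ)) ?_
  refine Submodule.disjoint_def.2 fun f hf hker => ?_
  have hf' : f ∈ expansionSpan K B :=
    Submodule.span_mono (by rintro _ ⟨b, rfl⟩; exact ⟨b, b.2, rfl⟩) hf
  exact eq_zero_of_forall_lowestExponents hf' fun a ha =>
    congrFun (LinearMap.mem_ker.1 hker) ⟨a, mem_findConeClosed.2 ha⟩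

end FindConeClosed

theorem find_cone_closed_monotone_map_general
    (n : ℕ) :
    ∃ Φ : Finset (Fin n → ℕ) → Finset (Fin n → ℕ),
      (∀ B, ∀ m ∈ Φ B, ∀ e : Fin n → ℕ, e ≤ m → e ∈ Φ B) ∧
      (∀ B, (Φ B).card = B.card) ∧
      (∀ B : Finset (Fin n → ℕ),
        ∃ N : Matrix B (Φ B) ℚ,
          (Matrix.of fun (a : Φ B) (b : B) =>
              ((∏ i, ((b : Fin n → ℕ) i).choose ((a : Fin n → ℕ) i) : ℕ) : ℚ)) * N = 1 ∧
          N * (Matrix.of fun (a : Φ B) (b : B) =>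
              ((∏ i, ((b : Fin n → ℕ) i).choose ((a : Fin n → ℕ) i) : ℕ) : ℚ)) = 1) ∧
      (∀ B B' : Finset (Fin n → ℕ), B ⊆ B' → Φ B ⊆ Φ B') := by
  refine ⟨findConeClosed ℚ, fun B m hm e he => isLowerSet_findConeClosed ℚ B he hm,
    card_findConeClosed ℚ, fun B => ?_, fun _ _ => findConeClosed_mono ℚ⟩
  refine Matrix.exists_mul_eq_one_of_injective_mulVec ?_ (by simp [card_findConeClosed])
  exact Matrix.mulVec_injective_iff.2 (linearIndependent_restrict_binomialCoeffs ℚ B)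

/-- **Monotone Find-Cone-Closed map.** For `n ≥ 1` there is a map `Φ` on finite sets
of exponent vectors in `ℕ^n` such that `Φ(B)` is cone-closed, `|Φ(B)| = |B|`, the
transfer matrix `T(a,b) = ∏ᵢ C(bᵢ, aᵢ)` (rows indexed by `Φ(B)`, columns by `B`)
is invertible over `ℚ`, and `Φ` is monotone with respect to inclusion. -/
theorem find_cone_closed_monotone_map
    (n : ℕ) (hn : 1 ≤ n) :
    ∃ Φ : Finset (Fin n → ℕ) → Finset (Fin n → ℕ),
      (∀ B, ∀ m ∈ Φ B, ∀ e : Fin n → ℕ, e ≤ m → e ∈ Φ B) ∧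
      (∀ B, (Φ B).card = B.card) ∧
      (∀ B : Finset (Fin n → ℕ),
        ∃ N : Matrix B (Φ B) ℚ,
          (Matrix.of fun (a : Φ B) (b : B) =>
              ((∏ i, ((b : Fin n → ℕ) i).choose ((a : Fin n → ℕ) i) : ℕ) : ℚ)) * N = 1 ∧
          N * (Matrix.of fun (a : Φ B) (b : B) =>
              ((∏ i, ((b : Fin n → ℕ) i).choose ((a : Fin n → ℕ) i) : ℕ) : ℚ)) = 1) ∧
      (∀ B B' : Finset (Fin n → ℕ), B ⊆ B' → Φ B ⊆ Φ B') :=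
  find_cone_closed_monotone_map_general n
end

section
/- Let F be a field of characteristic zero, n ≥ 1, and let ⪯ be a monomial order on exponent vectors in ℕ^n (a linear order compatible with addition that is a well-order). For every nonzero polynomial f ∈ F[x₁, …, xₙ], the dimension over F of the partial-derivative space of f is at least the cone-size of the leading monomial of f with respect to ⪯, i.e., dim_F span_F{∂^e f : e ∈ ℕ^n} ≥ ∏_{i=1}^{n} (mᵢ + 1), where m is the ⪯-largest exponent vector in the support of f. -/
/-!
For `e ≤ m`, the derivative `∂^e f` has leading monomial `m - e`: on coefficients, `∂^e` moves
the exponent `d + e` to `d` and multiplies by a positive integer, which is nonzero in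
characteristic zero, so the top coefficient of `f` survives at `m - e` and nothing above it
appears. These `∏ (mᵢ + 1)` derivatives have pairwise distinct leading monomials, hence are
linearly independent.
-/

open scoped MonomialOrder

noncomputable def iterPDeriv (F : Type*) [CommSemiring F] (n : ℕ) (e : Fin n → ℕ) :
    Module.End F (MvPolynomial (Fin n) F) :=
  (List.ofFn fun i : Fin n =>
    ((MvPolynomial.pderiv i).toLinearMap : Module.End F (MvPolynomial (Fin n) F)) ^ (e i)).prod
open MvPolynomial

namespace MvPolynomial

variable {σ R : Type*} [CommSemiring R]

def ShiftsCoeffs (φ : Module.End R (MvPolynomial σ R)) (t : σ →₀ ℕ) : Prop :=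
  ∀ d : σ →₀ ℕ, ∃ k : ℕ, 0 < k ∧ ∀ f : MvPolynomial σ R, coeff d (φ f) = k * coeff (d + t) f

namespace ShiftsCoeffs

theorem one : ShiftsCoeffs (1 : Module.End R (MvPolynomial σ R)) 0 :=
  fun _ => ⟨1, one_pos, fun f => by simp⟩

theorem mul {φ ψ : Module.End R (MvPolynomial σ R)} {s t : σ →₀ ℕ}
    (hφ : ShiftsCoeffs φ s) (hψ : ShiftsCoeffs ψ t) : ShiftsCoeffs (φ * ψ) (s + t) := by
  intro d
  obtain ⟨k, hk, hφd⟩ := hφ d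
  obtain ⟨l, hl, hψd⟩ := hψ (d + s)
  refine ⟨k * l, Nat.mul_pos hk hl, fun f => ?_⟩
  rw [Module.End.mul_apply, hφd, hψd, add_assoc, Nat.cast_mul, mul_assoc]

theorem pow {φ : Module.End R (MvPolynomial σ R)} {t : σ →₀ ℕ} (hφ : ShiftsCoeffs φ t) :
    ∀ k : ℕ, ShiftsCoeffs (φ ^ k) (k • t)
  | 0 => by simpa using one
  | k + 1 => by simpa [pow_succ, add_smul] using (hφ.pow k).mul hφ

theorem prod_ofFn {k : ℕ} {φ : Fin k → Module.End R (MvPolynomial σ R)} {t : Fin k → σ →₀ ℕ}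
    (h : ∀ i, ShiftsCoeffs (φ i) (t i)) : ShiftsCoeffs (List.ofFn φ).prod (∑ i, t i) := by
  induction k with
  | zero => simpa using one
  | succ k ih =>
    rw [List.ofFn_succ, List.prod_cons, Fin.sum_univ_succ]
    exact (h 0).mul (ih fun i => h i.succ)

end ShiftsCoeffs

theorem shiftsCoeffs_pderiv (i : σ) :
    ShiftsCoeffs (pderiv (R := R) i).toLinearMap (Finsupp.single i 1) :=
  fun d => ⟨d i + 1, (d i).succ_pos, fun f => by simp [coeff_pderiv, mul_comm]⟩

theorem shiftsCoeffs_iterPDeriv {n : ℕ} (e : Fin n →₀ ℕ) : ShiftsCoeffs (iterPDeriv R n e) e := by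
  have h := ShiftsCoeffs.prod_ofFn fun i => (shiftsCoeffs_pderiv (R := R) i).pow (e i)
  simpa only [iterPDeriv, Finsupp.smul_single_one, Finsupp.univ_sum_single] using h

end MvPolynomial

open MvPolynomial

namespace MonomialOrder

variable {σ R : Type*} (mo : MonomialOrder σ)

section CommSemiring

variable [CommSemiring R] {φ : Module.End R (MvPolynomial σ R)} {t : σ →₀ ℕ}

theorem degree_apply_le_of_shiftsCoeffs (hφ : ShiftsCoeffs φ t) {f : MvPolynomial σ R}
    (ht : t ≤ mo.degree f) : mo.degree (φ f) ≼[mo] mo.degree f - t := by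
  refine mo.degree_le_iff.2 fun d hd => ?_
  obtain ⟨k, -, hk⟩ := hφ d
  have hdt : d + t ≼[mo] mo.degree f - t + t := by
    rw [tsub_add_cancel_of_le ht]
    refine mo.le_degree (mem_support_iff.2 fun h => ?_)
    exact mem_support_iff.1 hd (by rw [hk, h, mul_zero])
  simpa only [map_add, add_le_add_iff_right] using hdt

theorem coeff_apply_degree_sub_ne_zero_of_shiftsCoeffs [NoZeroDivisors R] [CharZero R]
    (hφ : ShiftsCoeffs φ t) {f : MvPolynomial σ R} (hf : f ≠ 0) (ht : t ≤ mo.degree f) :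
    coeff (mo.degree f - t) (φ f) ≠ 0 := by
  obtain ⟨k, hk, hcoeff⟩ := hφ (mo.degree f - t)
  rw [hcoeff, tsub_add_cancel_of_le ht]
  exact mul_ne_zero (Nat.cast_ne_zero.2 hk.ne') (mo.coeff_degree_ne_zero_iff.2 hf)

theorem degree_apply_of_shiftsCoeffs [NoZeroDivisors R] [CharZero R]
    (hφ : ShiftsCoeffs φ t) {f : MvPolynomial σ R} (hf : f ≠ 0) (ht : t ≤ mo.degree f) :
    mo.degree (φ f) = mo.degree f - t :=
  mo.toSyn.injective <| le_antisymm (mo.degree_apply_le_of_shiftsCoeffs hφ ht)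
    (mo.le_degree (mem_support_iff.2 (mo.coeff_apply_degree_sub_ne_zero_of_shiftsCoeffs hφ hf ht)))

theorem apply_ne_zero_of_shiftsCoeffs [NoZeroDivisors R] [CharZero R]
    (hφ : ShiftsCoeffs φ t) {f : MvPolynomial σ R} (hf : f ≠ 0) (ht : t ≤ mo.degree f) :
    φ f ≠ 0 := fun h =>
  mo.coeff_apply_degree_sub_ne_zero_of_shiftsCoeffs hφ hf ht (by rw [h, coeff_zero])

end CommSemiring

theorem linearIndependent_of_injective_degree [CommRing R] [NoZeroDivisors R] {ι : Type*}
    {g : ι → MvPolynomial σ R} (hg : ∀ i, g i ≠ 0) (hinj : Function.Injective (mo.degree ∘ g)) :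
    LinearIndependent R g := by
  classical
  rw [linearIndependent_iff']
  intro s c hsum i hi
  by_contra hci
  obtain ⟨j, hj, hjmax⟩ := (s.filter (c · ≠ 0)).exists_max_image (mo.toSyn ∘ mo.degree ∘ g)
    ⟨i, Finset.mem_filter.2 ⟨hi, hci⟩⟩
  rw [Finset.mem_filter] at hj
  have hcoeff := congrArg (coeff (mo.degree (g j))) hsum
  rw [coeff_sum, Finset.sum_eq_single j, coeff_smul, coeff_zero, smul_eq_mul] at hcoeff
  · exact mul_ne_zero hj.2 (mo.coeff_degree_ne_zero_iff.2 (hg j)) hcoeff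
  · intro l hl hlj
    rw [coeff_smul, smul_eq_mul]
    by_cases hcl : c l = 0
    · rw [hcl, zero_mul]
    · rw [mo.coeff_eq_zero_of_lt, mul_zero]
      exact lt_of_le_of_ne (hjmax l (Finset.mem_filter.2 ⟨hl, hcl⟩))
        (fun h => hlj (hinj (mo.toSyn.injective h)))
  · exact fun hj' => absurd hj.1 hj'

end MonomialOrder

theorem Finsupp.card_Iic_eq_prod_succ {σ : Type*} [Fintype σ] [DecidableEq σ] (m : σ →₀ ℕ) :
    (Finset.Iic m).card = ∏ i, (m i + 1) := by
  rw [Finsupp.card_Iic, Finset.prod_subset m.support.subset_univ fun i _ hi => by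
    simp [Finsupp.notMem_support_iff.1 hi]]
  simp

theorem partial_derivative_space_dim_ge_cone_size_of_leading_monomial_general
    (F : Type*) [Field F] [CharZero F] (n : ℕ)
    (mo : MonomialOrder (Fin n))
    (f : MvPolynomial (Fin n) F)
    (m : Fin n →₀ ℕ) (hmem : m ∈ f.support)
    (hmax : ∀ e ∈ f.support, e ≼[mo] m) :
    ((∏ i, (m i + 1) : ℕ) : Cardinal) ≤
      Module.rank F
        (Submodule.span F {g : MvPolynomial (Fin n) F |
          ∃ e : Fin n → ℕ, g = iterPDeriv F n e f}) := by
  have hf : f ≠ 0 := by rintro rfl; simp at hmem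
  obtain rfl : mo.degree f = m :=
    mo.toSyn.injective <| le_antisymm (mo.degree_le_iff.2 hmax) (mo.le_degree hmem)
  let derivs (e : Finset.Iic (mo.degree f)) := iterPDeriv F n e f
  have hshift (e : Finset.Iic (mo.degree f)) := shiftsCoeffs_iterPDeriv (R := F) e.1
  have hle (e : Finset.Iic (mo.degree f)) := Finset.mem_Iic.1 e.2
  have hdeg (e : Finset.Iic (mo.degree f)) : mo.degree (derivs e) = mo.degree f - e :=
    mo.degree_apply_of_shiftsCoeffs (hshift e) hf (hle e)
  have hind : LinearIndependent F derivs :=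
    mo.linearIndependent_of_injective_degree
      (fun e => mo.apply_ne_zero_of_shiftsCoeffs (hshift e) hf (hle e))
      (fun e e' h => Subtype.ext <| (tsub_right_inj (hle e) (hle e')).1 <|
        (hdeg e).symm.trans (h.trans (hdeg e')))
  set V := Submodule.span F {g : MvPolynomial (Fin n) F | ∃ e : Fin n → ℕ, g = iterPDeriv F n e f}
  have hindV : LinearIndependent F fun e => (⟨derivs e, Submodule.subset_span ⟨e, rfl⟩⟩ : V) :=
    .of_comp V.subtype hind
  have hcard := hindV.cardinal_lift_le_rank
  rwa [Cardinal.mk_fintype, Fintype.card_coe, Finsupp.card_Iic_eq_prod_succ,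
    Cardinal.lift_natCast, Cardinal.lift_uzero] at hcard

/-- **Partial-derivative space dimension vs. cone-size of the leading monomial.**
Over a characteristic-zero field, for any monomial order and any nonzero
polynomial `f`, the dimension of the span of all iterated partial derivatives of
`f` is at least the cone-size `∏ (mᵢ + 1)` of the leading monomial `m` of `f`. -/
theorem partial_derivative_space_dim_ge_cone_size_of_leading_monomial
    (F : Type*) [Field F] [CharZero F] (n : ℕ) (hn : 1 ≤ n)
    (mo : MonomialOrder (Fin n))
    (f : MvPolynomial (Fin n) F) (hf : f ≠ 0)
    (m : Fin n →₀ ℕ) (hmem : m ∈ f.support)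
    (hmax : ∀ e ∈ f.support, e ≼[mo] m) :
    ((∏ i, (m i + 1) : ℕ) : Cardinal) ≤
      Module.rank F
        (Submodule.span F {g : MvPolynomial (Fin n) F |
          ∃ e : Fin n → ℕ, g = iterPDeriv F n e f}) :=
  partial_derivative_space_dim_ge_cone_size_of_leading_monomial_general F n mo f m hmem hmax
end

section
/- Let F be a field of characteristic zero, n ≥ 1, and k ≥ 1 a natural number. If f ∈ F[x₁, …, xₙ] is nonzero and the dimension over F of the partial-derivative space of f is at most k, then f has a monomial x^e with nonzero coefficient whose cone-size satisfies ∏_{i=1}^{n} (eᵢ + 1) ≤ k. -/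
open Finset

namespace MvPolynomial

open Finsupp

variable {σ R : Type*} [CommSemiring R]

theorem coeff_pderiv_pow (i : σ) (k : ℕ) (p : MvPolynomial σ R) (m : σ →₀ ℕ) :
    coeff m ((((pderiv i).toLinearMap : Module.End R (MvPolynomial σ R)) ^ k) p) =
      coeff (m + single i k) p * (m i + k).descFactorial k := by
  induction k generalizing m p with
  | zero => simp
  | succ k ih =>
    rw [pow_succ, Module.End.mul_apply, ih, Derivation.coeFn_coe, coeff_pderiv,
      ← add_assoc (m i), Nat.succ_descFactorial_succ]
    simp only [Finsupp.add_apply, single_eq_same, add_assoc, ← single_add]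
    push_cast
    ring

theorem coeff_list_prod_pderiv_pow [DecidableEq σ] (d : σ → ℕ) (p : MvPolynomial σ R)
    (m : σ →₀ ℕ) {l : List σ} (hl : l.Nodup) :
    coeff m ((l.map fun i =>
        ((pderiv i).toLinearMap : Module.End R (MvPolynomial σ R)) ^ d i).prod p) =
      coeff (m + ∑ i ∈ l.toFinset, single i (d i)) p *
        ∏ i ∈ l.toFinset, (m i + d i).descFactorial (d i) := by
  induction l generalizing m with
  | nil => simp
  | cons h t ih =>
    obtain ⟨hht, ht⟩ := List.nodup_cons.mp hl
    have hshift : ∀ i ∈ t.toFinset, (m + single h (d h)) i = m i := fun i hi => by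
      rw [Finsupp.add_apply, single_eq_of_ne (by rintro rfl; exact hht (List.mem_toFinset.mp hi)),
        add_zero]
    rw [List.map_cons, List.prod_cons, Module.End.mul_apply, coeff_pderiv_pow, ih _ ht,
      prod_congr rfl fun i hi => by rw [hshift i hi], List.toFinset_cons,
      sum_insert (by simpa using hht), prod_insert (by simpa using hht), add_assoc]
    push_cast
    ring

end MvPolynomial

open MvPolynomial

theorem coeff_iterPDeriv {R : Type*} [CommSemiring R] {n : ℕ} (d m : Fin n →₀ ℕ)
    (p : MvPolynomial (Fin n) R) :
    coeff m (iterPDeriv R n d p) = coeff (m + d) p * ∏ i, (m i + d i).descFactorial (d i) := by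
  rw [iterPDeriv, List.ofFn_eq_map, coeff_list_prod_pderiv_pow _ _ _ (List.nodup_finRange n),
    List.toFinset_finRange, Finsupp.univ_sum_single]

theorem coeff_tsub_iterPDeriv_ne_zero {R : Type*} [CommSemiring R] [NoZeroDivisors R]
    [CharZero R] {n : ℕ} {p : MvPolynomial (Fin n) R} {d e : Fin n →₀ ℕ} (he : coeff e p ≠ 0)
    (hd : d ≤ e) : coeff (e - d) (iterPDeriv R n d p) ≠ 0 := by
  rw [coeff_iterPDeriv, tsub_add_cancel_of_le hd]
  refine mul_ne_zero he (Nat.cast_ne_zero.mpr (prod_ne_zero_iff.mpr fun i _ => ?_))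
  rw [Finsupp.tsub_apply, Nat.sub_add_cancel (hd i), Ne, Nat.descFactorial_eq_zero_iff_lt, not_lt]
  exact hd i

namespace MonomialOrder

theorem linearIndependent_of_injective_degree_s13 {ι σ R : Type*} [CommRing R] [NoZeroDivisors R]
    (m : MonomialOrder σ) {v : ι → MvPolynomial σ R} (hv : ∀ i, v i ≠ 0)
    (hdeg : Function.Injective fun i => m.degree (v i)) : LinearIndependent R v := by
  classical
  rw [linearIndependent_iff']
  intro s g hsum i hi
  by_contra hgi
  -- a nonzero term of maximal degree cannot be cancelled by the others
  obtain ⟨j, hj, hmax⟩ := (s.filter (g · ≠ 0)).exists_max_image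
    (fun j => m.toSyn (m.degree (v j))) ⟨i, mem_filter.mpr ⟨hi, hgi⟩⟩
  obtain ⟨hjs, hgj⟩ := mem_filter.mp hj
  have hcoeff := congrArg (coeff (m.degree (v j))) hsum
  rw [coeff_sum, coeff_zero, sum_eq_single_of_mem j hjs] at hcoeff
  · rw [coeff_smul, smul_eq_mul] at hcoeff
    exact mul_ne_zero hgj (m.coeff_degree_ne_zero_iff.mpr (hv j)) hcoeff
  · intro b hb hbj
    rw [coeff_smul, smul_eq_mul]
    by_cases hgb : g b = 0
    · rw [hgb, zero_mul]
    · rw [m.coeff_eq_zero_of_lt, mul_zero]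
      exact lt_of_le_of_ne (hmax b (mem_filter.mpr ⟨hb, hgb⟩))
        fun h => hbj (hdeg (m.toSyn.injective h))

theorem degree_iterPDeriv {R : Type*} [CommSemiring R] [NoZeroDivisors R] [CharZero R] {n : ℕ}
    (m : MonomialOrder (Fin n)) {p : MvPolynomial (Fin n) R} (hp : p ≠ 0)
    {d : Fin n →₀ ℕ} (hd : d ≤ m.degree p) :
    m.degree (iterPDeriv R n d p) = m.degree p - d := by
  have hlead : coeff (m.degree p) p ≠ 0 := m.coeff_degree_ne_zero_iff.mpr hp
  refine m.toSyn.injective (le_antisymm ?_ ?_)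
  · refine m.degree_le_iff.mpr fun c hc => ?_
    have hcd : c + d ≼[m] m.degree p := by
      refine m.le_degree (mem_support_iff.mpr fun h => ?_)
      rw [mem_support_iff, coeff_iterPDeriv, h, zero_mul] at hc
      exact hc rfl
    rw [← tsub_add_cancel_of_le hd, map_add, map_add] at hcd
    exact le_of_add_le_add_right hcd
  · exact m.le_degree (mem_support_iff.mpr (coeff_tsub_iterPDeriv_ne_zero hlead hd))

theorem linearIndependent_iterPDeriv {R : Type*} [CommRing R] [NoZeroDivisors R] [CharZero R]
    {n : ℕ} (m : MonomialOrder (Fin n)) {p : MvPolynomial (Fin n) R} (hp : p ≠ 0) :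
    LinearIndependent R fun d : Iic (m.degree p) => iterPDeriv R n d p := by
  have hle (d : Iic (m.degree p)) : (d : Fin n →₀ ℕ) ≤ m.degree p := mem_Iic.mp d.2
  refine m.linearIndependent_of_injective_degree_s13 (fun d => ?_) fun d₁ d₂ h => ?_
  · exact ne_zero_iff.mpr ⟨_, coeff_tsub_iterPDeriv_ne_zero
      (m.coeff_degree_ne_zero_iff.mpr hp) (hle d)⟩
  · simp only [m.degree_iterPDeriv hp (hle _)] at h
    exact Subtype.ext ((tsub_right_inj (hle d₁) (hle d₂)).mp h)

end MonomialOrder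

theorem Finsupp.card_Iic_eq_prod_add_one {ι : Type*} [Fintype ι] [DecidableEq ι] (e : ι →₀ ℕ) :
    #(Iic e) = ∏ i, (e i + 1) := by
  rw [Finsupp.card_Iic]
  simp only [Nat.card_Iic]
  exact prod_subset (subset_univ _) fun i _ hi => by simp [Finsupp.notMem_support_iff.mp hi]

theorem low_partial_derivative_space_has_low_cone_monomial_general
    (F : Type*) [Field F] [CharZero F] (n k : ℕ)
    (f : MvPolynomial (Fin n) F) (hf : f ≠ 0)
    (hdim : Module.rank F
        (Submodule.span F {g : MvPolynomial (Fin n) F |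
          ∃ e : Fin n → ℕ, g = iterPDeriv F n e f}) ≤ (k : Cardinal)) :
    ∃ e : Fin n →₀ ℕ, MvPolynomial.coeff e f ≠ 0 ∧ (∏ i, (e i + 1)) ≤ k := by
  set e := MonomialOrder.lex.degree f
  refine ⟨e, MonomialOrder.lex.coeff_degree_ne_zero_iff.mpr hf, ?_⟩
  set V := Submodule.span F {g : MvPolynomial (Fin n) F | ∃ e : Fin n → ℕ, g = iterPDeriv F n e f}
  let v : Iic e → V := fun d => ⟨iterPDeriv F n d f, Submodule.subset_span ⟨d, rfl⟩⟩
  have hv : LinearIndependent F v :=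
    .of_comp V.subtype (MonomialOrder.lex.linearIndependent_iterPDeriv hf)
  have hcard := hv.cardinal_lift_le_rank.trans (Cardinal.lift_le.mpr hdim)
  rw [Cardinal.mk_coe_finset, Cardinal.lift_natCast, Cardinal.lift_natCast] at hcard
  rw [← Finsupp.card_Iic_eq_prod_add_one]
  exact_mod_cast hcard

/-- **Small partial-derivative space yields a low-cone monomial.** Over a
characteristic-zero field, if `f ≠ 0` and the span of all iterated partial
derivatives of `f` has dimension at most `k`, then `f` has a monomial with
nonzero coefficient whose cone-size `∏ (eᵢ + 1)` is at most `k`. -/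
theorem low_partial_derivative_space_has_low_cone_monomial
    (F : Type*) [Field F] [CharZero F] (n k : ℕ) (hn : 1 ≤ n) (hk : 1 ≤ k)
    (f : MvPolynomial (Fin n) F) (hf : f ≠ 0)
    (hdim : Module.rank F
        (Submodule.span F {g : MvPolynomial (Fin n) F |
          ∃ e : Fin n → ℕ, g = iterPDeriv F n e f}) ≤ (k : Cardinal)) :
    ∃ e : Fin n →₀ ℕ, MvPolynomial.coeff e f ≠ 0 ∧ (∏ i, (e i + 1)) ≤ k :=
  low_partial_derivative_space_has_low_cone_monomial_general F n k f hf hdim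
end

section
/- Let F be a field of characteristic zero, n ≥ 1, and let a₁, …, aₙ be pairwise distinct natural numbers. Then the n × n matrix A over F with entries A_{i,j} = C(a_j, i − 1) for i, j ∈ [n] (the binomial coefficient 'a_j choose i−1', mapped into F) is invertible, i.e., has nonzero determinant. -/
/-- **Binomial-coefficient matrix is invertible (GKS16, Claim 3.3).** Over a field
`F` of characteristic zero, if `a₁, …, aₙ` are pairwise distinct natural numbers,
then the `n × n` matrix with `(i,j)`-entry `C(a_j, i-1)` (zero-indexed: row `i`
holds `C(a_j, i)`) has nonzero determinant. -/
theorem binomial_matrix_invertible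
    (F : Type*) [Field F] [CharZero F] (n : ℕ) (hn : 1 ≤ n)
    (a : Fin n → ℕ) (hdist : Function.Injective a) :
    (Matrix.of fun i j : Fin n => (((a j).choose (i : ℕ) : ℕ) : F)).det ≠ 0 := by
  rw [← Matrix.det_transpose]
  have h := Matrix.det_eval_matrixOfPolynomials_eq_det_vandermonde
      (fun i : Fin n => ((a i : ℕ) : F)) (fun i => descPochhammer F i)
      (fun i => descPochhammer_natDegree F i) (fun i => monic_descPochhammer F i)
  have h2 : (Matrix.of (fun (i j : Fin n) => (descPochhammer F (j : ℕ)).eval ((a i : ℕ) : F))).det =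
      (∏ i : Fin n, ((Nat.factorial i : ℕ) : F)) *
      ((Matrix.of fun i j : Fin n => (((a j).choose (i : ℕ) : ℕ) : F)).transpose).det := by
    convert Matrix.det_mul_row (fun (i : Fin n) => ((Nat.factorial (i : ℕ)) : F)) _
    rw [descPochhammer_eval_eq_descFactorial F _ _]
    rw [Nat.descFactorial_eq_factorial_mul_choose]
    simp [Matrix.transpose_apply]
  rw [h2] at h
  have hv : (Matrix.vandermonde fun i : Fin n => ((a i : ℕ) : F)).det ≠ 0 :=
    Matrix.det_vandermonde_ne_zero_iff.mpr (fun i j hij => hdist (Nat.cast_injective hij))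
  intro hzero
  rw [hzero, mul_zero] at h
  exact hv h
end

section
/- Let F be a field and let a, m ≥ 1 be natural numbers. Consider the polynomial ring F[x_{j,i} : j ∈ [a], i ∈ [m]] in a·m variables, and let φ : F[x_{j,i}] → F[y₁, …, y_a] be the F-algebra homomorphism determined by φ(x_{j,i}) = y_j^{2^{i−1}}. Then for every nonzero multilinear polynomial f (i.e., every variable occurs in f with individual degree at most 1), the image φ(f) is nonzero. In particular, this variable-reducing substitution from a·m variables to a variables preserves the nonzeroness of multilinear polynomials. -/
open MvPolynomial Finset

private lemma bits_inj : ∀ (m : ℕ) (g h : Fin m → ℕ), (∀ i, g i ≤ 1) → (∀ i, h i ≤ 1) →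
    (∑ i : Fin m, 2 ^ (i : ℕ) * g i) = (∑ i : Fin m, 2 ^ (i : ℕ) * h i) → g = h := by
  intro m
  induction m with
  | zero => intro g h _ _ _; funext i; exact i.elim0
  | succ n ih =>
      intro g h hg hh heq
      rw [Fin.sum_univ_succ, Fin.sum_univ_succ] at heq
      simp only [Fin.val_zero, pow_zero, one_mul, Fin.val_succ, pow_succ] at heq
      have h2 : ∀ (k : Fin n → ℕ), (∑ i : Fin n, 2 ^ (i : ℕ) * 2 * k i) = 2 * ∑ i : Fin n, 2 ^ (i : ℕ) * k i := by
        intro k; rw [Finset.mul_sum]; apply Finset.sum_congr rfl; intro i _; ring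
      rw [h2 fun i => g i.succ, h2 fun i => h i.succ] at heq
      have hg0 := hg 0
      have hh0 := hh 0
      have h0 : g 0 = h 0 ∧ (∑ i : Fin n, 2 ^ (i : ℕ) * g i.succ) = ∑ i : Fin n, 2 ^ (i : ℕ) * h i.succ := by
        omega
      have htail := ih (fun i => g i.succ) (fun i => h i.succ) (fun i => hg i.succ)
        (fun i => hh i.succ) h0.2
      funext i
      refine Fin.cases h0.1 (fun j => ?_) i
      exact congrFun htail j

private noncomputable def Tmap {a m : ℕ} (s : Fin a × Fin m →₀ ℕ) : Fin a →₀ ℕ :=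
  Finsupp.equivFunOnFinite.symm fun j => ∑ i : Fin m, 2 ^ (i : ℕ) * s (j, i)

private lemma Tmap_apply {a m : ℕ} (s : Fin a × Fin m →₀ ℕ) (j : Fin a) :
    Tmap s j = ∑ i : Fin m, 2 ^ (i : ℕ) * s (j, i) := rfl

private lemma aeval_monomial_eq {F : Type*} [Field F] {a m : ℕ}
    (s : Fin a × Fin m →₀ ℕ) (c : F) :
    MvPolynomial.aeval
      (fun p : Fin a × Fin m =>
        (MvPolynomial.X p.1 : MvPolynomial (Fin a) F) ^ (2 ^ (p.2 : ℕ)))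
      (monomial s c) = monomial (Tmap s) c := by
  rw [aeval_monomial]
  have h1 : (s.prod fun p k =>
      ((MvPolynomial.X p.1 : MvPolynomial (Fin a) F) ^ (2 ^ (p.2 : ℕ))) ^ k)
      = ∏ p : Fin a × Fin m, (MvPolynomial.X p.1 : MvPolynomial (Fin a) F) ^ (2 ^ (p.2 : ℕ) * s p) := by
    rw [Finsupp.prod]
    rw [← Finset.prod_subset (Finset.subset_univ s.support)]
    · apply Finset.prod_congr rfl; intro p _; rw [← pow_mul]
    · intro p _ hp
      simp [Finsupp.notMem_support_iff.mp hp]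
  rw [h1]
  have h2 : (∏ p : Fin a × Fin m, (MvPolynomial.X p.1 : MvPolynomial (Fin a) F) ^ (2 ^ (p.2 : ℕ) * s p))
      = ∏ j : Fin a, (MvPolynomial.X j : MvPolynomial (Fin a) F) ^ (Tmap s j) := by
    rw [Fintype.prod_prod_type]
    apply Finset.prod_congr rfl
    intro j _
    show (∏ i : Fin m, (MvPolynomial.X j : MvPolynomial (Fin a) F) ^ (2 ^ (i : ℕ) * s (j, i))) = _
    rw [Finset.prod_pow_eq_pow_sum, Tmap_apply]
  rw [h2]
  have h3 : (∏ j : Fin a, (MvPolynomial.X j : MvPolynomial (Fin a) F) ^ (Tmap s j))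
      = monomial (Tmap s) (1 : F) := by
    rw [← prod_X_pow_eq_monomial]
    rw [← Finset.prod_subset (Finset.subset_univ (Tmap s).support)]
    intro j _ hj
    rw [Finsupp.notMem_support_iff.mp hj, pow_zero]
  rw [h3, algebraMap_eq, C_mul_monomial, mul_one]

/-- **Local Kronecker map preserves nonzeroness of multilinear polynomials.**
Let `φ` be the `F`-algebra homomorphism from `F[x_{j,i} : j ∈ [a], i ∈ [m]]` to
`F[y₁,…,y_a]` sending `x_{j,i} ↦ y_j^{2^{i-1}}` (zero-indexed: `x_{j,i} ↦ y_j^{2^i}`).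
Then `φ` maps every nonzero multilinear polynomial to a nonzero polynomial. -/
theorem local_kronecker_preserves_multilinear_nonzero
    (F : Type*) [Field F] (a m : ℕ) (ha : 1 ≤ a) (hm : 1 ≤ m)
    (f : MvPolynomial (Fin a × Fin m) F) (hf : f ≠ 0)
    (hml : ∀ v : Fin a × Fin m, f.degreeOf v ≤ 1) :
    MvPolynomial.aeval
      (fun p : Fin a × Fin m =>
        (MvPolynomial.X p.1 : MvPolynomial (Fin a) F) ^ (2 ^ (p.2 : ℕ))) f ≠ 0 := by
  obtain ⟨s₀, hs₀⟩ := Finset.nonempty_iff_ne_empty.mpr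
    (fun h => hf (MvPolynomial.support_eq_empty.mp h))
  -- key: exponents in the support are 0/1-valued
  have hbit : ∀ s ∈ f.support, ∀ p, s p ≤ 1 := fun s hs p =>
    le_trans (monomial_le_degreeOf p hs) (hml p)
  -- T is injective on the support
  have hTinj : ∀ s ∈ f.support, Tmap s = Tmap s₀ → s = s₀ := by
    intro s hs hT
    ext p
    obtain ⟨j, i⟩ := p
    have hj : (fun i => s (j, i)) = fun i => s₀ (j, i) := by
      apply bits_inj m _ _ (fun i => hbit s hs (j, i)) (fun i => hbit s₀ hs₀ (j, i))
      rw [← Tmap_apply, ← Tmap_apply, hT]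
    exact congrFun hj i
  intro hzero
  have hexp : MvPolynomial.aeval
      (fun p : Fin a × Fin m =>
        (MvPolynomial.X p.1 : MvPolynomial (Fin a) F) ^ (2 ^ (p.2 : ℕ))) f
      = ∑ s ∈ f.support, monomial (Tmap s) (f.coeff s) := by
    conv_lhs => rw [f.as_sum]
    rw [map_sum]
    exact Finset.sum_congr rfl fun s _ => aeval_monomial_eq s (f.coeff s)
  have hcoeff : MvPolynomial.coeff (Tmap s₀)
      (∑ s ∈ f.support, monomial (Tmap s) (f.coeff s)) = f.coeff s₀ := by
    rw [MvPolynomial.coeff_sum]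
    rw [Finset.sum_eq_single s₀]
    · rw [coeff_monomial, if_pos rfl]
    · intro s hs hne
      rw [coeff_monomial, if_neg]
      exact fun h => hne (hTinj s hs h)
    · intro h; exact absurd hs₀ h
  rw [hexp] at hzero
  rw [hzero] at hcoeff
  simp only [MvPolynomial.coeff_zero] at hcoeff
  exact (MvPolynomial.mem_support_iff.mp hs₀) hcoeff.symm
end
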